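/- arXiv:2107.08965 — 10 statements merged into one kernel-verified Lean document; each statement's English description precedes it below -/
import Mathlib

section
/- Let O be a non-wasteful allocation and O* any allocation of all of G, with b_i = |O_i ∩ B_i| and b*_i = |O*_i ∩ B_i|. For every agent i with b*_i > b_i there exists an agent j with b*_j < b_j such that in the transformation graph G_{O*→O} there is a BB-balancing path from i to j. -/
open Finset

variable {N G : Type*}

/-- Agent `i`'s 2-value additive valuation of bundle `A`:
big goods (in `Bset i`) are worth 1, all others worth `v`. -/
def twoVal [DecidableEq G] (Bset : N → Finset G) (v : ℚ) (i : N) (A : Finset G) : ℚ :=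
  ((A ∩ Bset i).card : ℚ) + v * ((A \ Bset i).card : ℚ)

/-- An allocation: pairwise disjoint bundles covering all of `G`. -/
def IsAllocation [Fintype N] [Fintype G] [DecidableEq G] (A : N → Finset G) : Prop :=
  (Set.univ : Set N).PairwiseDisjoint A ∧ Finset.univ.biUnion A = (Finset.univ : Finset G)

/-- A non-wasteful allocation: pairwise disjoint bundles with `A i ⊆ Bset i`
covering `B = ⋃ i, Bset i`. -/
def IsNonWasteful [Fintype N] [DecidableEq G] (Bset A : N → Finset G) : Prop :=
  (Set.univ : Set N).PairwiseDisjoint A ∧ (∀ i, A i ⊆ Bset i) ∧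
    Finset.univ.biUnion A = Finset.univ.biUnion Bset

/-- There is a BB-balancing path from `i` to `j` in the transformation graph `G_{Aa → Ab}`. -/
def ExistsBBPath [DecidableEq G] (Aa Ab Bset : N → Finset G) (i j : N) : Prop :=
  ∃ (k : ℕ) (hk : 1 ≤ k) (ag : Fin (k + 1) → N) (gd : Fin k → G),
    Function.Injective gd ∧ ag 0 = i ∧ ag (Fin.last k) = j ∧
    (∀ t : Fin k, gd t ∈ Aa (ag t.castSucc) ∧ gd t ∈ Ab (ag t.succ)) ∧
    (∀ t : Fin k, 1 ≤ t.val →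
      (gd t ∈ Bset (ag t.castSucc) ↔
        gd ⟨t.val - 1, by have := t.isLt; omega⟩ ∈ Bset (ag t.castSucc))) ∧
    gd ⟨0, by omega⟩ ∈ Bset i ∧ gd ⟨k - 1, by omega⟩ ∈ Bset j

/-!
Follow from `i` only edges of `G_{O* → O}` labelled by goods that are big for
their `O*`-owner; since `O` is non-wasteful, such a good is big for its `O`-owner too, so every
path of this kind is BB-balancing. The set `S` of agents reached this way is closed: each big
good of `O*_j`, `j ∈ S`, lies in `O_{j'}` for some `j' ∈ S`. Hence `∑_{S} b*_j ≤ ∑_{S} b_j`,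
and as `b*_i > b_i`, some `j ∈ S` has `b*_j < b_j`. A path to `j` can be taken to visit
distinct agents, and then its goods, which come from distinct bundles of `O*`, are distinct.
-/

theorem Relation.ReflTransGen.exists_injective_chain {α : Type*} {R : α → α → Prop}
    {a b : α} (h : Relation.ReflTransGen R a b) :
    ∃ (k : ℕ) (ag : Fin (k + 1) → α), Function.Injective ag ∧ ag 0 = a ∧
      ag (Fin.last k) = b ∧ ∀ t : Fin k, R (ag t.castSucc) (ag t.succ) := by
  induction h with
  | refl =>
    exact ⟨0, fun _ => a, fun x y _ => Subsingleton.elim (α := Fin 1) x y, rfl, rfl, Fin.elim0⟩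
  | @tail b c _ hbc ih =>
    obtain ⟨k, ag, hinj, h0, hlast, hstep⟩ := ih
    by_cases hc : c ∈ Set.range ag
    · obtain ⟨m, rfl⟩ := hc
      refine ⟨m, ag ∘ Fin.castLE m.isLt, hinj.comp (Fin.castLE_injective _), h0, rfl,
        fun t => hstep ⟨t, by omega⟩⟩
    · refine ⟨k + 1, Fin.snoc ag c, Fin.snoc_injective_iff.2 ⟨hinj, hc⟩, ?_,
        Fin.snoc_last _ _, fun t => ?_⟩
      · rw [← Fin.castSucc_zero, Fin.snoc_castSucc, h0]
      · induction t using Fin.lastCases with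
        | last => simpa [hlast] using hbc
        | cast s =>
          rw [Fin.succ_castSucc, Fin.snoc_castSucc, Fin.snoc_castSucc]
          exact hstep s

theorem Finset.sum_card_le_sum_card_of_subset_biUnion {ι α : Type*} [DecidableEq α]
    {S : Finset ι} {f g : ι → Finset α} (hf : (S : Set ι).PairwiseDisjoint f)
    (h : ∀ j ∈ S, f j ⊆ S.biUnion g) :
    ∑ j ∈ S, #(f j) ≤ ∑ j ∈ S, #(g j) :=
  calc ∑ j ∈ S, #(f j) = #(S.biUnion f) := (card_biUnion hf).symm
    _ ≤ #(S.biUnion g) := card_le_card (biUnion_subset.2 h)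
    _ ≤ ∑ j ∈ S, #(g j) := card_biUnion_le

section BigEdge

variable [DecidableEq G] {Bset O Ostar : N → Finset G}

/-- An edge `a → b` of the transformation graph `G_{O* → O}` carried by a good that is big
for `a`. -/
def BigEdge (Ostar O Bset : N → Finset G) (a b : N) : Prop :=
  ∃ g ∈ Ostar a ∩ Bset a, g ∈ O b

theorem exists_reflTransGen_bigEdge_card_lt [Fintype N] (hO : IsNonWasteful Bset O)
    (hOstar : (Set.univ : Set N).PairwiseDisjoint Ostar) {i : N}
    (hi : #(O i ∩ Bset i) < #(Ostar i ∩ Bset i)) :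
    ∃ j, Relation.ReflTransGen (BigEdge Ostar O Bset) i j ∧
      #(Ostar j ∩ Bset j) < #(O j ∩ Bset j) := by
  classical
  by_contra! hS
  set S := univ.filter (Relation.ReflTransGen (BigEdge Ostar O Bset) i)
  have hiS : i ∈ S := mem_filter.2 ⟨mem_univ i, .refl⟩
  have hclosed : ∀ j ∈ S, Ostar j ∩ Bset j ⊆ S.biUnion fun j' => O j' ∩ Bset j' := by
    intro j hj g hg
    have hgB : g ∈ univ.biUnion O :=
      hO.2.2 ▸ mem_biUnion.2 ⟨j, mem_univ j, (mem_inter.1 hg).2⟩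
    obtain ⟨j', -, hgj'⟩ := mem_biUnion.1 hgB
    have hj' : j' ∈ S := mem_filter.2 ⟨mem_univ j', (mem_filter.1 hj).2.tail ⟨g, hg, hgj'⟩⟩
    exact mem_biUnion.2 ⟨j', hj', mem_inter.2 ⟨hgj', hO.2.1 j' hgj'⟩⟩
  have hle := sum_card_le_sum_card_of_subset_biUnion
    (fun a _ b _ hab => (hOstar (Set.mem_univ a) (Set.mem_univ b) hab).mono
      inter_subset_left inter_subset_left) hclosed
  exact hle.not_gt (sum_lt_sum (fun j hj => hS j (mem_filter.1 hj).2) ⟨i, hiS, hi⟩)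

theorem existsBBPath_of_bigEdge_chain (hOstar : (Set.univ : Set N).PairwiseDisjoint Ostar)
    (hO : ∀ j, O j ⊆ Bset j) {k : ℕ} (hk : 1 ≤ k) {ag : Fin (k + 1) → N}
    (hinj : Function.Injective ag)
    (hstep : ∀ t : Fin k, BigEdge Ostar O Bset (ag t.castSucc) (ag t.succ)) :
    ExistsBBPath Ostar O Bset (ag 0) (ag (Fin.last k)) := by
  choose gd hgd hgdO using hstep
  have hmem : ∀ t, gd t ∈ Ostar (ag t.castSucc) := fun t => (mem_inter.1 (hgd t)).1
  have hbig : ∀ t, gd t ∈ Bset (ag t.castSucc) := fun t => (mem_inter.1 (hgd t)).2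
  have hgd_inj : Function.Injective gd := by
    intro s t hst
    by_contra hne
    have hag : ag s.castSucc ≠ ag t.castSucc := fun h =>
      hne (Fin.castSucc_injective _ (hinj h))
    exact disjoint_left.1 (hOstar (Set.mem_univ _) (Set.mem_univ _) hag) (hmem s)
      (hst ▸ hmem t)
  refine ⟨k, hk, ag, gd, hgd_inj, rfl, rfl, fun t => ⟨hmem t, hgdO t⟩, fun t ht => ?_,
    hbig ⟨0, hk⟩, ?_⟩
  · -- the previous good was received by `ag t` in `O`, hence is big for it
    have hprev := hO _ (hgdO ⟨t - 1, by omega⟩)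
    rw [show (⟨t - 1, _⟩ : Fin k).succ = t.castSucc from Fin.ext (Nat.sub_add_cancel ht)] at hprev
    exact iff_of_true (hbig t) hprev
  · have hlast := hO _ (hgdO ⟨k - 1, by omega⟩)
    rwa [show (⟨k - 1, _⟩ : Fin k).succ = Fin.last k from Fin.ext (Nat.sub_add_cancel hk)] at hlast

end BigEdge

theorem stmt0_general [Fintype N] [Fintype G] [DecidableEq G]
    (Bset : N → Finset G)
    (O Ostar : N → Finset G)
    (hO : IsNonWasteful Bset O) (hOstar : IsAllocation Ostar)
    (i : N) (hi : (O i ∩ Bset i).card < (Ostar i ∩ Bset i).card) :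
    ∃ j : N, (Ostar j ∩ Bset j).card < (O j ∩ Bset j).card ∧
      ExistsBBPath Ostar O Bset i j := by
  obtain ⟨j, hij, hj⟩ := exists_reflTransGen_bigEdge_card_lt hO hOstar.1 hi
  obtain ⟨k, ag, hinj, rfl, rfl, hstep⟩ := hij.exists_injective_chain
  have hk : 1 ≤ k := by
    rcases Nat.eq_zero_or_pos k with rfl | hk
    · rw [Fin.last_zero] at hj
      omega
    · exact hk
  exact ⟨_, hj, existsBBPath_of_bigEdge_chain hOstar.1 hO.2.1 hk hinj hstep⟩

/-- Lemma 2.2: for every agent `i` with `b*_i > b_i` there is an agent `j`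
with `b*_j < b_j` reachable from `i` by a BB-balancing path in `G_{O* → O}`. -/
theorem stmt0 [Fintype N] [DecidableEq N] [Fintype G] [DecidableEq G]
    (Bset : N → Finset G) (v : ℚ) (hv0 : 0 < v) (hv1 : v < 1)
    (O Ostar : N → Finset G)
    (hO : IsNonWasteful Bset O) (hOstar : IsAllocation Ostar)
    (i : N) (hi : (O i ∩ Bset i).card < (Ostar i ∩ Bset i).card) :
    ∃ j : N, (Ostar j ∩ Bset j).card < (O j ∩ Bset j).card ∧
      ExistsBBPath Ostar O Bset i j :=
  stmt0_general Bset O Ostar hO hOstar i hi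
end

section
/- Let A^P be a partial big-allocation (pairwise disjoint sets with A^P_i ⊆ B_i for every agent i), let G^U = G \ ⋃_i A^P_i, and let A be a small-extension of A^P. Write s_j = |A_j \ B_j|. If for every pair of agents i, j the inequality v_i(A_i) + v < v_j(A_j) implies s_j = 0, then A maximizes the Nash product: for every small-extension A' of A^P one has ∏_{i∈N} v_i(A'_i) ≤ ∏_{i∈N} v_i(A_i). -/
/-!
In every small-extension of `AP`, agent `i` is worth `b i + v * s i` with `b i = |AP i|` and
`s i` the number of its small goods, and `∑ s i = |G^U|` is the same for all small-extensions.
So `s` only competes with integer profiles `t` of the same total. While `t ≠ s`, pick `i` with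
`s i < t i` and `j` with `t j < s j`; the hypothesis (applied to `j`, who holds a small good)
gives `b j + v * t j + v ≤ b i + v * t i`, so moving one unit of `t` from `i` to `j` replaces
`x * y` by `(x - v) * (y + v) ≥ x * y`. Finitely many such moves reach `s`.
-/

open Finset

variable {N G : Type*}

/-- `A` is a small-extension of the partial big-allocation `AP`: it is an allocation
extending `AP`, and every newly assigned good is an unassigned good that is small for
the agent receiving it. -/
def IsSmallExtension [Fintype N] [Fintype G] [DecidableEq G]
    (Bset AP A : N → Finset G) : Prop :=
  IsAllocation A ∧ (∀ i, AP i ⊆ A i) ∧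
    ∀ i, ∀ g ∈ A i \ AP i,
      g ∈ ((Finset.univ : Finset G) \ Finset.univ.biUnion AP) \ Bset i

section Exchange

variable {ι K : Type*} [Fintype ι]

lemma exists_lt_of_sum_eq_of_ne {M : Type*} [AddCommMonoid M] [LinearOrder M]
    [IsOrderedCancelAddMonoid M] {s t : ι → M} (hsum : ∑ i, t i = ∑ i, s i) (hne : t ≠ s) :
    ∃ i, s i < t i := by
  by_contra! hle
  exact hne (funext fun i => (sum_eq_sum_iff_of_le fun i _ => hle i).mp hsum i (mem_univ i))

@[to_additive]
lemma prod_eq_mul_mul_prod_compl_pair {M : Type*} [CommMonoid M] [DecidableEq ι]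
    (f : ι → M) {i j : ι} (hij : i ≠ j) : ∏ k, f k = f i * f j * ∏ k ∈ {i, j}ᶜ, f k := by
  rw [← prod_pair hij, prod_mul_prod_compl]

variable [CommRing K] [LinearOrder K] [IsStrictOrderedRing K]

lemma mul_le_sub_mul_add {x y v : K} (hv : 0 ≤ v) (h : y + v ≤ x) :
    x * y ≤ (x - v) * (y + v) := by
  nlinarith

lemma prod_le_prod_of_le_on_pair [DecidableEq ι] {f g : ι → K} {i j : ι} (hij : i ≠ j)
    (hf : ∀ k, 0 ≤ f k) (hfg : ∀ k, k ≠ i → k ≠ j → f k = g k)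
    (h : f i * f j ≤ g i * g j) : ∏ k, f k ≤ ∏ k, g k := by
  have hrest : ∏ k ∈ {i, j}ᶜ, f k = ∏ k ∈ {i, j}ᶜ, g k :=
    prod_congr rfl fun k hk => by
      simp only [mem_compl, mem_insert, mem_singleton, not_or] at hk
      exact hfg k hk.1 hk.2
  rw [prod_eq_mul_mul_prod_compl_pair f hij, prod_eq_mul_mul_prod_compl_pair g hij, hrest]
  exact mul_le_mul_of_nonneg_right h (hrest ▸ prod_nonneg fun k _ => hf k)

end Exchange

section MoveUnit

variable {ι : Type*} [DecidableEq ι]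

def moveUnit (t : ι → ℕ) (i j : ι) : ι → ℕ :=
  Function.update (Function.update t i (t i - 1)) j (t j + 1)

variable {t : ι → ℕ} {i j : ι}

lemma moveUnit_apply_left (hij : i ≠ j) : moveUnit t i j i = t i - 1 := by
  simp [moveUnit, hij]

@[simp]
lemma moveUnit_apply_right : moveUnit t i j j = t j + 1 := by
  simp [moveUnit]

lemma moveUnit_apply_of_ne {k : ι} (hki : k ≠ i) (hkj : k ≠ j) : moveUnit t i j k = t k := by
  simp [moveUnit, hki, hkj]

variable [Fintype ι]

lemma sum_moveUnit (hij : i ≠ j) (hi : 0 < t i) : ∑ k, moveUnit t i j k = ∑ k, t k := by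
  have hrest : ∑ k ∈ {i, j}ᶜ, moveUnit t i j k = ∑ k ∈ {i, j}ᶜ, t k :=
    sum_congr rfl fun k hk => by
      simp only [mem_compl, mem_insert, mem_singleton, not_or] at hk
      exact moveUnit_apply_of_ne hk.1 hk.2
  rw [sum_eq_add_add_sum_compl_pair _ hij, sum_eq_add_add_sum_compl_pair t hij, hrest,
    moveUnit_apply_left hij, moveUnit_apply_right]
  omega

lemma sum_tsub_moveUnit_lt {s : ι → ℕ} (hi : s i < t i) (hj : t j < s j) :
    ∑ k, (moveUnit t i j k - s k) < ∑ k, (t k - s k) := by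
  have hij : i ≠ j := by rintro rfl; omega
  refine sum_lt_sum (fun k _ => ?_) ⟨i, mem_univ i, by rw [moveUnit_apply_left hij]; omega⟩
  by_cases hki : k = i
  · subst hki; rw [moveUnit_apply_left hij]; omega
  by_cases hkj : k = j
  · subst hkj; rw [moveUnit_apply_right]; omega
  · rw [moveUnit_apply_of_ne hki hkj]

end MoveUnit

section Balanced

variable {ι K : Type*} [Fintype ι] [CommRing K] [LinearOrder K] [IsStrictOrderedRing K]

def IsBalanced (b : ι → K) (v : K) (s : ι → ℕ) : Prop :=
  ∀ i j, 0 < s j → b j + v * s j ≤ b i + v * s i + v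

variable {b : ι → K} {v : K} {s : ι → ℕ}

lemma IsBalanced.prod_le_prod_moveUnit [DecidableEq ι] {t : ι → ℕ} {i j : ι}
    (hs : IsBalanced b v s) (hv : 0 ≤ v) (hb : ∀ i, 0 ≤ b i) (hi : s i < t i) (hj : t j < s j) :
    ∏ k, (b k + v * t k) ≤ ∏ k, (b k + v * moveUnit t i j k) := by
  have hij : i ≠ j := by rintro rfl; omega
  have hstep : b j + v * t j + v ≤ b i + v * t i := by
    have hti : (s i : K) + 1 ≤ t i := by exact_mod_cast hi
    have htj : (t j : K) + 1 ≤ s j := by exact_mod_cast hj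
    calc b j + v * t j + v = b j + v * (t j + 1) := by ring
      _ ≤ b j + v * s j := by gcongr
      _ ≤ b i + v * s i + v := hs i j (by omega)
      _ = b i + v * (s i + 1) := by ring
      _ ≤ b i + v * t i := by gcongr
  refine prod_le_prod_of_le_on_pair hij (fun k => add_nonneg (hb k) (by positivity))
    (fun k hki hkj => by rw [moveUnit_apply_of_ne hki hkj]) ?_
  calc (b i + v * t i) * (b j + v * t j)
      ≤ (b i + v * t i - v) * (b j + v * t j + v) := mul_le_sub_mul_add hv hstep
    _ = (b i + v * moveUnit t i j i) * (b j + v * moveUnit t i j j) := by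
      rw [moveUnit_apply_left hij, moveUnit_apply_right, Nat.cast_sub (by omega : 1 ≤ t i)]
      push_cast
      ring

theorem IsBalanced.prod_le (hs : IsBalanced b v s) (hv : 0 ≤ v) (hb : ∀ i, 0 ≤ b i)
    (t : ι → ℕ) (hsum : ∑ i, t i = ∑ i, s i) :
    ∏ i, (b i + v * t i) ≤ ∏ i, (b i + v * s i) := by
  classical
  induction hd : ∑ i, (t i - s i) using Nat.strong_induction_on generalizing t with
  | _ n ih =>
  by_cases hts : t = s
  · rw [hts]
  obtain ⟨i, hi⟩ := exists_lt_of_sum_eq_of_ne hsum hts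
  obtain ⟨j, hj⟩ := exists_lt_of_sum_eq_of_ne hsum.symm (Ne.symm hts)
  have hij : i ≠ j := by rintro rfl; omega
  refine (hs.prod_le_prod_moveUnit hv hb hi hj).trans (ih _ ?_ _ ?_ rfl)
  · exact hd ▸ sum_tsub_moveUnit_lt hi hj
  · rw [sum_moveUnit hij (by omega), hsum]

end Balanced

namespace IsSmallExtension

variable [Fintype N] [Fintype G] [DecidableEq G] {Bset AP A : N → Finset G}

lemma inter_eq (hA : IsSmallExtension Bset AP A) (hAPbig : ∀ i, AP i ⊆ Bset i) (i : N) :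
    A i ∩ Bset i = AP i := by
  refine Subset.antisymm (fun g hg => ?_) (subset_inter (hA.2.1 i) (hAPbig i))
  rw [mem_inter] at hg
  by_contra hgAP
  exact (mem_sdiff.mp (hA.2.2 i g (mem_sdiff.mpr ⟨hg.1, hgAP⟩))).2 hg.2

lemma sdiff_eq (hA : IsSmallExtension Bset AP A) (hAPbig : ∀ i, AP i ⊆ Bset i) (i : N) :
    A i \ Bset i = A i \ AP i := by
  refine Subset.antisymm (sdiff_subset_sdiff subset_rfl (hAPbig i)) (fun g hg => ?_)
  exact mem_sdiff.mpr ⟨(mem_sdiff.mp hg).1, (mem_sdiff.mp (hA.2.2 i g hg)).2⟩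

lemma twoVal_eq (hA : IsSmallExtension Bset AP A) (hAPbig : ∀ i, AP i ⊆ Bset i) (v : ℚ)
    (i : N) : twoVal Bset v i (A i) = (AP i).card + v * (A i \ Bset i).card := by
  rw [twoVal, hA.inter_eq hAPbig]

lemma biUnion_sdiff_eq (hA : IsSmallExtension Bset AP A) (hAPbig : ∀ i, AP i ⊆ Bset i) :
    univ.biUnion (fun i => A i \ Bset i) = univ \ univ.biUnion AP := by
  ext g
  simp only [mem_biUnion, mem_univ, true_and, mem_sdiff, hA.sdiff_eq hAPbig, not_exists]
  constructor
  · rintro ⟨i, hg⟩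
    simpa using (mem_sdiff.mp (hA.2.2 i g (mem_sdiff.mpr hg))).1
  · intro hg
    obtain ⟨i, -, hgi⟩ := mem_biUnion.mp (hA.1.2 ▸ mem_univ g)
    exact ⟨i, hgi, hg i⟩

lemma sum_card_sdiff (hA : IsSmallExtension Bset AP A) (hAPbig : ∀ i, AP i ⊆ Bset i) :
    ∑ i, (A i \ Bset i).card = (univ \ univ.biUnion AP).card := by
  rw [← hA.biUnion_sdiff_eq hAPbig, card_biUnion]
  exact fun i _ j _ hij =>
    (hA.1.1 (Set.mem_univ i) (Set.mem_univ j) hij).mono sdiff_subset sdiff_subset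

end IsSmallExtension

theorem stmt2_general [Fintype N] [Fintype G] [DecidableEq G]
    (Bset : N → Finset G) (v : ℚ) (hv0 : 0 < v)
    (AP : N → Finset G)
    (hAPbig : ∀ i, AP i ⊆ Bset i)
    (A : N → Finset G) (hA : IsSmallExtension Bset AP A)
    (hbal : ∀ i j : N, twoVal Bset v i (A i) + v < twoVal Bset v j (A j) →
      (A j \ Bset j).card = 0) :
    ∀ A' : N → Finset G, IsSmallExtension Bset AP A' →
      ∏ i, twoVal Bset v i (A' i) ≤ ∏ i, twoVal Bset v i (A i) := by
  intro A' hA'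
  simp only [hA.twoVal_eq hAPbig, hA'.twoVal_eq hAPbig] at hbal ⊢
  have hbalanced : IsBalanced (fun i => ((AP i).card : ℚ)) v fun i => (A i \ Bset i).card := by
    intro i j hj
    by_contra! hlt
    exact hj.ne' (hbal i j hlt)
  exact hbalanced.prod_le hv0.le (fun i => Nat.cast_nonneg _) _
    (by rw [hA.sum_card_sdiff hAPbig, hA'.sum_card_sdiff hAPbig])

/-- Proposition 3.2: a small-extension in which any agent strictly more than `v` above
another agent holds no small goods maximizes the Nash product among all small-extensions. -/
theorem stmt2 [Fintype N] [DecidableEq N] [Fintype G] [DecidableEq G]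
    (Bset : N → Finset G) (v : ℚ) (hv0 : 0 < v) (hv1 : v < 1)
    (AP : N → Finset G)
    (hAPdisj : (Set.univ : Set N).PairwiseDisjoint AP)
    (hAPbig : ∀ i, AP i ⊆ Bset i)
    (A : N → Finset G) (hA : IsSmallExtension Bset AP A)
    (hbal : ∀ i j : N, twoVal Bset v i (A i) + v < twoVal Bset v j (A j) →
      (A j \ Bset j).card = 0) :
    ∀ A' : N → Finset G, IsSmallExtension Bset AP A' →
      ∏ i, twoVal Bset v i (A' i) ≤ ∏ i, twoVal Bset v i (A i) :=
  stmt2_general Bset v hv0 AP hAPbig A hA hbal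
end

section
/- Suppose there is an agent i with b_i < b*_i, and let j be any agent with b*_j < b_j such that there is a BB-balancing path from i to j in the transformation graph G_{O*→O}. Then v_i(O*_i) − 1 + v·⌊1/v⌋ < v_j(O*_j) < v_i(O*_i) − 1 + v·⌈1/v⌉, and moreover b_j ≤ b_i + 1 and b_j ≤ b*_i. -/
/-!
Every good on a BB-balancing path from `i` to `j` is big both for the agent holding it in `O*`
and for the agent receiving it in `O`. Shifting the path goods backwards in `O` keeps it
non-wasteful while `i` gains and `j` loses one good, so the optimality of `O` gives
`b_j ≤ b_i + 1 ≤ b*_i`. Shifting them forwards in `O*`, and also handing `s` goods that are small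
for `j` from `j` to `i`, produces an allocation strictly closer to `O`; hence its Nash product is
strictly smaller, i.e. `(v_i - 1 + s v) (v_j + 1 - s v) < v_i v_j` whenever `j` holds at least `s`
small goods. (The Nash product of `O*` is positive: otherwise `O`, completed arbitrarily, would be
a maximizer at least as close to `O`, forcing `O ⊆ O*`.) The cases `s = 0`, `s = ⌊1/v⌋` and
`s = ⌊1/v⌋ + 1` give the two bounds.
-/

open Finset

variable {N G : Type*}

/-- The Nash product of an allocation. -/
def nashProd [Fintype N] [DecidableEq G] (Bset : N → Finset G) (v : ℚ)
    (A : N → Finset G) : ℚ :=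
  ∏ i, twoVal Bset v i (A i)

/-- `O` is an optimal allocation for the dichotomous instance: among non-wasteful
allocations it maximizes the number of agents with nonempty bundle and, subject to
that, the product of bundle sizes over agents with nonempty bundle. -/
def DichOptimal [Fintype N] [DecidableEq G] (Bset O : N → Finset G) : Prop :=
  IsNonWasteful Bset O ∧
    ∀ O' : N → Finset G, IsNonWasteful Bset O' →
      ((Finset.univ.filter fun i => O' i ≠ ∅).card ≤
        (Finset.univ.filter fun i => O i ≠ ∅).card) ∧
      ((Finset.univ.filter fun i => O' i ≠ ∅).card =
          (Finset.univ.filter fun i => O i ≠ ∅).card →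
        ∏ i ∈ Finset.univ.filter fun i => O' i ≠ ∅, (O' i).card ≤
          ∏ i ∈ Finset.univ.filter fun i => O i ≠ ∅, (O i).card)

/-- `Ostar` maximizes the Nash product over all allocations and, among Nash-product
maximizers, maximizes `∑ i, |O i ∩ Ostar i|` (it is sum-closest to `O`). -/
def NashOptimalClosest [Fintype N] [Fintype G] [DecidableEq G]
    (Bset : N → Finset G) (v : ℚ) (O Ostar : N → Finset G) : Prop :=
  IsAllocation Ostar ∧
    (∀ A : N → Finset G, IsAllocation A → nashProd Bset v A ≤ nashProd Bset v Ostar) ∧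
    (∀ A : N → Finset G, IsAllocation A → nashProd Bset v A = nashProd Bset v Ostar →
      ∑ i, (O i ∩ A i).card ≤ ∑ i, (O i ∩ Ostar i).card)

lemma Set.PairwiseDisjoint.eq_of_mem {A : N → Finset G}
    (hA : (Set.univ : Set N).PairwiseDisjoint A) {x : G} {a b : N} (ha : x ∈ A a)
    (hb : x ∈ A b) : a = b :=
  hA.elim_finset (Set.mem_univ a) (Set.mem_univ b) x ha hb

section MoveAlong

variable {ι : Type*} [Fintype ι] [DecidableEq N] [DecidableEq G]

def moveAlong (A : N → Finset G) (src dst : ι → N) (g : ι → G) (h : N) : Finset G :=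
  (A h \ (univ.filter (src · = h)).image g) ∪ (univ.filter (dst · = h)).image g

variable {A : N → Finset G} {src dst : ι → N} {g : ι → G}

lemma mem_moveAlong (hA : (Set.univ : Set N).PairwiseDisjoint A) (hsrc : ∀ t, g t ∈ A (src t))
    {x : G} {h : N} :
    x ∈ moveAlong A src dst g h ↔ (∃ t, g t = x ∧ dst t = h) ∨ (x ∉ Set.range g ∧ x ∈ A h) := by
  simp only [moveAlong, mem_union, mem_sdiff, mem_image, mem_filter, mem_univ, true_and,
    Set.mem_range]
  constructor
  · rintro (⟨hxA, hxout⟩ | ⟨t, hdst, rfl⟩)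
    · refine Or.inr ⟨fun ⟨t, hgt⟩ => hxout ⟨t, ?_, hgt⟩, hxA⟩
      exact hA.eq_of_mem (hgt ▸ hsrc t) hxA
    · exact Or.inl ⟨t, rfl, hdst⟩
  · rintro (⟨t, rfl, hdst⟩ | ⟨hxg, hxA⟩)
    · exact Or.inr ⟨t, hdst, rfl⟩
    · exact Or.inl ⟨hxA, fun ⟨t, _, hgt⟩ => hxg ⟨t, hgt⟩⟩

lemma pairwiseDisjoint_moveAlong (hA : (Set.univ : Set N).PairwiseDisjoint A)
    (hsrc : ∀ t, g t ∈ A (src t)) (hg : g.Injective) :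
    (Set.univ : Set N).PairwiseDisjoint (moveAlong A src dst g) := by
  intro p _ q _ hpq
  refine Finset.disjoint_left.2 fun x hp hq => hpq ?_
  rw [mem_moveAlong hA hsrc] at hp hq
  rcases hp with ⟨t, rfl, rfl⟩ | ⟨hx, hp⟩ <;> rcases hq with ⟨t', ht, rfl⟩ | ⟨hx', hq⟩
  · rw [hg ht]
  · exact (hx' ⟨t, rfl⟩).elim
  · exact (hx ⟨t', ht⟩).elim
  · exact hA.eq_of_mem hp hq

lemma biUnion_moveAlong [Fintype N] (hA : (Set.univ : Set N).PairwiseDisjoint A)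
    (hsrc : ∀ t, g t ∈ A (src t)) :
    univ.biUnion (moveAlong A src dst g) = univ.biUnion A := by
  ext x
  simp only [mem_biUnion, mem_univ, true_and, mem_moveAlong hA hsrc]
  constructor
  · rintro ⟨h, ⟨t, rfl, -⟩ | ⟨-, hx⟩⟩
    · exact ⟨src t, hsrc t⟩
    · exact ⟨h, hx⟩
  · rintro ⟨h, hx⟩
    by_cases hxg : x ∈ Set.range g
    · obtain ⟨t, rfl⟩ := hxg
      exact ⟨dst t, Or.inl ⟨t, rfl, rfl⟩⟩
    · exact ⟨h, Or.inr ⟨hxg, hx⟩⟩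

lemma sum_moveAlong {M : Type*} [AddCommGroup M] (hA : (Set.univ : Set N).PairwiseDisjoint A)
    (hsrc : ∀ t, g t ∈ A (src t)) (hg : g.Injective) (w : G → M) (h : N) :
    ∑ x ∈ moveAlong A src dst g h, w x =
      ∑ x ∈ A h, w x - ∑ t with src t = h, w (g t) + ∑ t with dst t = h, w (g t) := by
  have hout : (univ.filter (src · = h)).image g ⊆ A h := by
    simp only [subset_iff, mem_image, mem_filter, mem_univ, true_and]
    rintro _ ⟨t, rfl, rfl⟩
    exact hsrc t
  have hdisj : Disjoint (A h \ (univ.filter (src · = h)).image g)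
      ((univ.filter (dst · = h)).image g) := by
    refine disjoint_right.2 fun x hin hx => (mem_sdiff.1 hx).2 ?_
    obtain ⟨t, -, rfl⟩ := mem_image.1 hin
    exact mem_image_of_mem g (mem_filter.2 ⟨mem_univ t, hA.eq_of_mem (hsrc t) (mem_sdiff.1 hx).1⟩)
  rw [moveAlong, sum_union hdisj, sum_sdiff_eq_sub hout, sum_image hg.injOn, sum_image hg.injOn]

lemma card_moveAlong (hA : (Set.univ : Set N).PairwiseDisjoint A)
    (hsrc : ∀ t, g t ∈ A (src t)) (hg : g.Injective) (h : N) :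
    ((moveAlong A src dst g h).card : ℤ) =
      (A h).card - #{t | src t = h} + #{t | dst t = h} := by
  simpa using sum_moveAlong hA hsrc hg (fun _ => (1 : ℤ)) h

lemma sum_card_inter_moveAlong [Fintype N] (O : N → Finset G)
    (hA : (Set.univ : Set N).PairwiseDisjoint A) (hsrc : ∀ t, g t ∈ A (src t))
    (hg : g.Injective) :
    (∑ h, (O h ∩ moveAlong A src dst g h).card : ℤ) =
      ∑ h, ((O h ∩ A h).card : ℤ) - #{t | g t ∈ O (src t)} + #{t | g t ∈ O (dst t)} := by
  have hcard : ∀ h s, ((O h ∩ s).card : ℤ) = ∑ x ∈ s, if x ∈ O h then 1 else 0 := by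
    intro h s
    rw [inter_comm, ← filter_mem_eq_inter, natCast_card_filter]
  have hfiber : ∀ f : ι → N, ∑ h, ∑ t with f t = h, (if g t ∈ O h then (1 : ℤ) else 0) =
      #{t | g t ∈ O (f t)} := by
    intro f
    rw [natCast_card_filter, ← sum_fiberwise univ f]
    refine sum_congr rfl fun h _ => sum_congr rfl fun t ht => ?_
    rw [(mem_filter.1 ht).2]
  simp only [hcard, sum_moveAlong hA hsrc hg, sum_add_distrib, sum_sub_distrib, hfiber]

lemma IsAllocation.moveAlong [Fintype N] [Fintype G] (hA : IsAllocation A)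
    (hsrc : ∀ t, g t ∈ A (src t)) (hg : g.Injective) :
    IsAllocation (moveAlong A src dst g) :=
  ⟨pairwiseDisjoint_moveAlong hA.1 hsrc hg, (biUnion_moveAlong hA.1 hsrc).trans hA.2⟩

lemma IsNonWasteful.moveAlong [Fintype N] {B : N → Finset G} (hA : IsNonWasteful B A)
    (hsrc : ∀ t, g t ∈ A (src t)) (hg : g.Injective) (hdst : ∀ t, g t ∈ B (dst t)) :
    IsNonWasteful B (moveAlong A src dst g) := by
  refine ⟨pairwiseDisjoint_moveAlong hA.1 hsrc hg, fun h x hx => ?_,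
    (biUnion_moveAlong hA.1 hsrc).trans hA.2.2⟩
  rcases (mem_moveAlong hA.1 hsrc).1 hx with ⟨t, rfl, rfl⟩ | ⟨-, hx⟩
  exacts [hdst t, hA.2.1 h hx]

end MoveAlong

lemma twoVal_eq_sum [DecidableEq G] (B : N → Finset G) (v : ℚ) (h : N) (A : Finset G) :
    twoVal B v h A = ∑ x ∈ A, if x ∈ B h then 1 else v := by
  simp [twoVal, sum_ite, filter_mem_eq_inter, ← sdiff_eq_filter, mul_comm]

lemma twoVal_nonneg [DecidableEq G] (B : N → Finset G) {v : ℚ} (hv : 0 ≤ v) (h : N)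
    (A : Finset G) : 0 ≤ twoVal B v h A := by
  unfold twoVal
  positivity

lemma twoVal_moveAlong {ι : Type*} [Fintype ι] [DecidableEq N] [DecidableEq G]
    {A B : N → Finset G} {src dst : ι → N} {g : ι → G} (v : ℚ)
    (hA : (Set.univ : Set N).PairwiseDisjoint A) (hsrc : ∀ t, g t ∈ A (src t))
    (hg : g.Injective) (hbig : ∀ t, g t ∈ B (src t) ∧ g t ∈ B (dst t)) (h : N) :
    twoVal B v h (moveAlong A src dst g h) =
      twoVal B v h (A h) - #{t | src t = h} + #{t | dst t = h} := by
  have hone : ∀ f : ι → N, (∀ t, g t ∈ B (f t)) →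
      ∑ t with f t = h, (if g t ∈ B h then 1 else v) = (#{t | f t = h} : ℚ) := by
    intro f hf
    rw [natCast_card_filter, sum_filter]
    refine sum_congr rfl fun t _ => ?_
    by_cases ht : f t = h
    · rw [if_pos ht, if_pos ht, if_pos (ht ▸ hf t)]
    · rw [if_neg ht, if_neg ht]
  rw [twoVal_eq_sum, twoVal_eq_sum, sum_moveAlong hA hsrc hg, hone src fun t => (hbig t).1,
    hone dst fun t => (hbig t).2]

lemma card_filter_succ_sub_card_filter_castSucc {α : Type*} [DecidableEq α] {k : ℕ}
    (a : Fin (k + 1) → α) (x : α) :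
    (#{t : Fin k | a t.succ = x} : ℤ) - #{t : Fin k | a t.castSucc = x} =
      (if a (Fin.last k) = x then 1 else 0) - (if a 0 = x then 1 else 0) := by
  have h₁ := Fin.sum_univ_succ fun m => if a m = x then (1 : ℤ) else 0
  have h₂ := Fin.sum_univ_castSucc fun m => if a m = x then (1 : ℤ) else 0
  rw [natCast_card_filter, natCast_card_filter]
  linarith

lemma exists_castSucc_ne_succ {α : Type*} {k : ℕ} (a : Fin (k + 1) → α)
    (h : a 0 ≠ a (Fin.last k)) : ∃ t : Fin k, a t.castSucc ≠ a t.succ := by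
  by_contra! hc
  exact h (Fin.induction (motive := fun m => a m = a 0) rfl
    (fun t ht => (hc t).symm.trans ht) (Fin.last k)).symm

lemma mul_mul_prod_erase_erase {ι R : Type*} [CommMonoid R] [DecidableEq ι] {s : Finset ι}
    {i j : ι} (hi : i ∈ s) (hj : j ∈ s) (hij : i ≠ j) (f : ι → R) :
    f i * f j * ∏ x ∈ (s.erase i).erase j, f x = ∏ x ∈ s, f x := by
  rw [mul_assoc, mul_prod_erase _ _ (mem_erase.2 ⟨hij.symm, hj⟩), mul_prod_erase _ _ hi]

section PairOfFactors

variable {ι R : Type*} [CommSemiring R] [LinearOrder R] [IsStrictOrderedRing R] [DecidableEq ι]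
  {s : Finset ι} {i j : ι} {f f' : ι → R}

lemma mul_le_mul_of_prod_le_prod_of_eqOn (hi : i ∈ s) (hj : j ∈ s) (hij : i ≠ j)
    (hrest : ∀ x ∈ s, x ≠ i → x ≠ j → f' x = f x ∧ 0 < f x)
    (hle : ∏ x ∈ s, f' x ≤ ∏ x ∈ s, f x) : f' i * f' j ≤ f i * f j := by
  have hrest' : ∀ x ∈ (s.erase i).erase j, f' x = f x ∧ 0 < f x := by
    simp only [mem_erase]
    exact fun x ⟨hxj, hxi, hx⟩ => hrest x hx hxi hxj
  rw [← mul_mul_prod_erase_erase hi hj hij f', ← mul_mul_prod_erase_erase hi hj hij f,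
    prod_congr rfl fun x hx => (hrest' x hx).1] at hle
  exact le_of_mul_le_mul_right hle (prod_pos fun x hx => (hrest' x hx).2)

lemma mul_lt_mul_of_prod_lt_prod_of_eqOn (hi : i ∈ s) (hj : j ∈ s) (hij : i ≠ j)
    (hrest : ∀ x ∈ s, x ≠ i → x ≠ j → f' x = f x ∧ 0 < f x)
    (hlt : ∏ x ∈ s, f' x < ∏ x ∈ s, f x) : f' i * f' j < f i * f j := by
  have hrest' : ∀ x ∈ (s.erase i).erase j, f' x = f x ∧ 0 < f x := by
    simp only [mem_erase]
    exact fun x ⟨hxj, hxi, hx⟩ => hrest x hx hxi hxj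
  rw [← mul_mul_prod_erase_erase hi hj hij f', ← mul_mul_prod_erase_erase hi hj hij f,
    prod_congr rfl fun x hx => (hrest' x hx).1] at hlt
  exact lt_of_mul_lt_mul_right hlt (prod_pos fun x hx => (hrest' x hx).2).le

end PairOfFactors

structure BigGoodsPath (Aa Ab B : N → Finset G) (i j : N) where
  length : ℕ
  agent : Fin (length + 1) → N
  good : Fin length → G
  injective : good.Injective
  agent_zero : agent 0 = i
  agent_last : agent (Fin.last length) = j
  mem_src : ∀ t, good t ∈ Aa (agent t.castSucc)
  mem_dst : ∀ t, good t ∈ Ab (agent t.succ)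
  big_src : ∀ t, good t ∈ B (agent t.castSucc)

lemma ExistsBBPath.nonempty_bigGoodsPath [DecidableEq G] {Aa Ab B : N → Finset G} {i j : N}
    (hAb : ∀ h, Ab h ⊆ B h) (hp : ExistsBBPath Aa Ab B i j) :
    Nonempty (BigGoodsPath Aa Ab B i j) := by
  obtain ⟨k, hk, ag, gd, hinj, h0, hlast, hmem, hbal, hfirst, -⟩ := hp
  refine ⟨⟨k, ag, gd, hinj, h0, hlast, fun t => (hmem t).1, fun t => (hmem t).2, ?_⟩⟩
  rintro ⟨_ | n, hn⟩
  · simpa [h0] using hfirst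
  · -- the previous good was received by the same agent, so it is big for it
    refine (hbal ⟨n + 1, hn⟩ (by simp)).2 ?_
    exact hAb _ (hmem ⟨n, by omega⟩).2

lemma card_le_card_add_one_of_dichOptimal [Fintype N] [DecidableEq N] [DecidableEq G]
    {B O O' : N → Finset G} {i j : N} (hO : DichOptimal B O) (hO' : IsNonWasteful B O')
    (hij : i ≠ j)
    (hcard : ∀ h, ((O' h).card : ℤ) =
      (O h).card + (if i = h then 1 else 0) - (if j = h then 1 else 0)) :
    (O j).card ≤ (O i).card + 1 := by
  by_contra! hlt
  have hi : ((O' i).card : ℤ) = (O i).card + 1 := by simpa [hij.symm] using hcard i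
  have hj : ((O' j).card : ℤ) = (O j).card - 1 := by simpa [hij] using hcard j
  have hrest : ∀ h, h ≠ i → h ≠ j → (O' h).card = (O h).card := fun h hhi hhj => by
    simpa [Ne.symm hhi, Ne.symm hhj] using hcard h
  have hne : ∀ h, O' h ≠ ∅ ↔ O h ≠ ∅ ∨ h = i := by
    intro h
    simp only [ne_eq, ← card_eq_zero]
    by_cases hhi : h = i
    · subst hhi
      simp only [or_true, iff_true]
      omega
    by_cases hhj : h = j
    · subst hhj
      simp only [hhi, or_false]
      omega
    simp [hhi, hrest h hhi hhj]
  by_cases hOi : O i = ∅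
  · -- `O'` gives a good to one more agent
    have hsub : insert i (univ.filter (O · ≠ ∅)) ⊆ univ.filter (O' · ≠ ∅) := by
      intro h
      simp only [mem_insert, mem_filter, mem_univ, true_and, hne]
      tauto
    have := card_le_card hsub
    rw [card_insert_of_notMem (by simp [hOi])] at this
    have := (hO.2 O' hO').1
    omega
  · have hF : univ.filter (O' · ≠ ∅) = univ.filter (O · ≠ ∅) := by
      ext h
      simp only [mem_filter, mem_univ, true_and, hne, or_iff_left_iff_imp]
      exact fun hh => hh ▸ hOi
    have hprod := (hO.2 O' hO').2 (by rw [hF])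
    rw [hF] at hprod
    have hmem : ∀ h, O h ≠ ∅ → h ∈ univ.filter (O · ≠ ∅) := fun h hh => by simpa using hh
    have hpair := mul_le_mul_of_prod_le_prod_of_eqOn (hmem i hOi)
      (hmem j (by rintro hOj; simp [hOj] at hlt)) hij
      (fun h hh hhi hhj => ⟨hrest h hhi hhj, by simpa [card_pos, nonempty_iff_ne_empty] using hh⟩)
      hprod
    have : ((O' i).card * (O' j).card : ℤ) ≤ (O i).card * (O j).card := by exact_mod_cast hpair
    rw [hi, hj] at this
    nlinarith

lemma BigGoodsPath.card_le_card_add_one [Fintype N] [DecidableEq N] [DecidableEq G]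
    {Aa B O : N → Finset G} {i j : N} (hO : DichOptimal B O) (p : BigGoodsPath Aa O B i j)
    (hij : i ≠ j) : (O j).card ≤ (O i).card + 1 := by
  refine card_le_card_add_one_of_dichOptimal hO
    (hO.1.moveAlong p.mem_dst p.injective p.big_src) hij fun h => ?_
  have htel := card_filter_succ_sub_card_filter_castSucc p.agent h
  rw [p.agent_zero, p.agent_last] at htel
  rw [card_moveAlong hO.1.1 p.mem_dst p.injective]
  linarith

lemma exists_isAllocation_forall_subset [Fintype N] [Fintype G] [DecidableEq G]
    {O : N → Finset G} (hO : (Set.univ : Set N).PairwiseDisjoint O) (j : N) :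
    ∃ A, IsAllocation A ∧ ∀ h, O h ⊆ A h := by
  classical
  refine ⟨fun h => O h ∪ univ.filter (fun x => h = j ∧ ∀ h', x ∉ O h'), ⟨?_, ?_⟩,
    fun h => subset_union_left⟩
  · intro p _ q _ hpq
    refine Finset.disjoint_left.2 fun x hp hq => hpq ?_
    simp only [mem_union, mem_filter, mem_univ, true_and] at hp hq
    rcases hp with hp | ⟨rfl, hp⟩ <;> rcases hq with hq | ⟨rfl, hq⟩
    · exact hO.eq_of_mem hp hq
    · exact (hq p hp).elim
    · exact (hp q hq).elim
    · rfl
  · ext x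
    simp only [mem_biUnion, mem_univ, mem_union, mem_filter, true_and, iff_true]
    by_cases hx : ∃ h, x ∈ O h
    · obtain ⟨h, hx⟩ := hx
      exact ⟨h, Or.inl hx⟩
    · simp only [not_exists] at hx
      exact ⟨j, Or.inr ⟨rfl, hx⟩⟩

lemma NashOptimalClosest.subset_of_nashProd_eq_zero [Fintype N] [Fintype G] [DecidableEq G]
    {B O Ostar : N → Finset G} {v : ℚ} (hOstar : NashOptimalClosest B v O Ostar) (hv : 0 ≤ v)
    (hO : (Set.univ : Set N).PairwiseDisjoint O) (h0 : nashProd B v Ostar = 0) (h : N) :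
    O h ⊆ Ostar h := by
  obtain ⟨A, hA, hOA⟩ := exists_isAllocation_forall_subset hO h
  have hnash : nashProd B v A = nashProd B v Ostar :=
    le_antisymm (hOstar.2.1 A hA) (h0 ▸ prod_nonneg fun h _ => twoVal_nonneg B hv h _)
  have hclose := hOstar.2.2 A hA hnash
  simp only [inter_eq_left.2 (hOA _)] at hclose
  have hle : ∀ h ∈ univ, (O h ∩ Ostar h).card ≤ (O h).card :=
    fun h _ => card_le_card inter_subset_left
  have heq := (sum_eq_sum_iff_of_le hle).1 (le_antisymm (sum_le_sum hle) hclose) h (mem_univ h)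
  exact inter_eq_left.1 (eq_of_subset_of_card_le inter_subset_left heq.ge)

lemma card_mul_le_twoVal [DecidableEq G] (B : N → Finset G) {v : ℚ} (hv : v ≤ 1) (h : N)
    (S : Finset G) : S.card * v ≤ twoVal B v h S := by
  have hcard : ((S ∩ B h).card : ℚ) + (S \ B h).card = S.card := by
    exact_mod_cast card_inter_add_card_sdiff S (B h)
  have : ((S ∩ B h).card : ℚ) * v ≤ (S ∩ B h).card := mul_le_of_le_one_right (by positivity) hv
  rw [twoVal, ← hcard]
  linarith

lemma twoVal_of_disjoint [DecidableEq G] (B : N → Finset G) (v : ℚ) {h : N} {S : Finset G}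
    (hS : Disjoint S (B h)) : twoVal B v h S = S.card * v := by
  rw [twoVal, disjoint_iff_inter_eq_empty.1 hS, sdiff_eq_self_of_disjoint hS, card_empty]
  ring

lemma exists_transfer_of_isAllocation [Fintype N] [Fintype G] [DecidableEq N] [DecidableEq G]
    {A : N → Finset G} (hA : IsAllocation A) {i j : N} {S : Finset G} (hS : S ⊆ A j)
    (O B : N → Finset G) (v : ℚ) (hSO : Disjoint S (O j)) :
    ∃ A', IsAllocation A' ∧
      (∀ h, twoVal B v h (A' h) = twoVal B v h (A h) - (if j = h then twoVal B v h S else 0) +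
        (if i = h then twoVal B v h S else 0)) ∧
      ∑ h, (O h ∩ A h).card ≤ ∑ h, (O h ∩ A' h).card := by
  have hsrc : ∀ x : S, (x : G) ∈ A j := fun x => hS x.2
  refine ⟨moveAlong A (fun _ : S => j) (fun _ => i) Subtype.val,
    hA.moveAlong hsrc Subtype.val_injective, fun h => ?_, ?_⟩
  · simp only [twoVal_eq_sum, sum_moveAlong hA.1 hsrc Subtype.val_injective, filter_const]
    split_ifs <;> simp [sum_attach S (fun x => if x ∈ B h then (1 : ℚ) else v)]
  · have hagree := sum_card_inter_moveAlong O hA.1 hsrc Subtype.val_injective (dst := fun _ => i)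
    have hnone : #{x : S | (x : G) ∈ O j} = 0 :=
      card_eq_zero.2 (filter_false_of_mem fun x _ => disjoint_left.1 hSO x.2)
    rw [hnone] at hagree
    zify
    omega

section NashExchange

variable [Fintype N] [Fintype G] [DecidableEq N] [DecidableEq G] {Ostar O B : N → Finset G}
  {i j : N}

lemma BigGoodsPath.exists_shift (p : BigGoodsPath Ostar O B i j) (hOstar : IsAllocation Ostar)
    (hOB : ∀ h, O h ⊆ B h) (hO : (Set.univ : Set N).PairwiseDisjoint O) (hij : i ≠ j) (v : ℚ) :
    ∃ A, IsAllocation A ∧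
      (∀ h, twoVal B v h (A h) =
        twoVal B v h (Ostar h) + (if j = h then 1 else 0) - (if i = h then 1 else 0)) ∧
      ∑ h, (O h ∩ Ostar h).card < ∑ h, (O h ∩ A h).card ∧ Ostar j \ B j ⊆ A j := by
  refine ⟨moveAlong Ostar (fun t => p.agent t.castSucc) (fun t => p.agent t.succ) p.good,
    hOstar.moveAlong p.mem_src p.injective, fun h => ?_, ?_, fun x hx => ?_⟩
  · have htel := card_filter_succ_sub_card_filter_castSucc p.agent h
    rw [p.agent_zero, p.agent_last] at htel
    have htelQ : (#{t : Fin p.length | p.agent t.succ = h} : ℚ) -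
        #{t : Fin p.length | p.agent t.castSucc = h} =
        (if j = h then 1 else 0) - (if i = h then 1 else 0) := by
      exact_mod_cast htel
    rw [twoVal_moveAlong v hOstar.1 p.mem_src p.injective
      fun t => ⟨p.big_src t, hOB _ (p.mem_dst t)⟩]
    linarith
  · have hagree := sum_card_inter_moveAlong O hOstar.1 p.mem_src p.injective
      (dst := fun t => p.agent t.succ)
    have hall : #{t | p.good t ∈ O (p.agent t.succ)} = p.length := by
      rw [filter_true_of_mem fun t _ => p.mem_dst t, card_univ, Fintype.card_fin]
    -- a good can stay with its `O`-owner only along a stationary step, and the path moves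
    have hlt : #{t | p.good t ∈ O (p.agent t.castSucc)} < p.length := by
      obtain ⟨t, ht⟩ := exists_castSucc_ne_succ p.agent (by rwa [p.agent_zero, p.agent_last])
      simpa using card_lt_card (filter_ssubset.2 ⟨t, mem_univ t, fun hmem =>
        ht (hO.eq_of_mem hmem (p.mem_dst t))⟩)
    zify
    omega
  · obtain ⟨hxO, hxB⟩ := mem_sdiff.1 hx
    refine (mem_moveAlong hOstar.1 p.mem_src).2 (Or.inr ⟨?_, hxO⟩)
    rintro ⟨t, rfl⟩
    have : p.agent t.castSucc = j := hOstar.1.eq_of_mem (p.mem_src t) hxO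
    exact hxB (by simpa [this] using p.big_src t)

lemma BigGoodsPath.nash_exchange {v : ℚ} (hv0 : 0 ≤ v) (hv1 : v ≤ 1)
    (hOstar : NashOptimalClosest B v O Ostar) (hOB : ∀ h, O h ⊆ B h)
    (hO : (Set.univ : Set N).PairwiseDisjoint O) (hpos : ∀ h, 0 < twoVal B v h (Ostar h))
    (p : BigGoodsPath Ostar O B i j) (hij : i ≠ j) {S : Finset G} (hS : S ⊆ Ostar j \ B j) :
    (twoVal B v i (Ostar i) - 1 + S.card * v) * (twoVal B v j (Ostar j) + 1 - S.card * v) <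
      twoVal B v i (Ostar i) * twoVal B v j (Ostar j) := by
  obtain ⟨A, hA, hval, hclose, hsub⟩ := p.exists_shift hOstar.1 hOB hO hij v
  have hSB : Disjoint S (B j) := disjoint_left.2 fun x hx => (mem_sdiff.1 (hS hx)).2
  obtain ⟨A', hA', hval', hclose'⟩ := exists_transfer_of_isAllocation hA (i := i)
    (hS.trans hsub) O B v (hSB.mono_right (hOB j))
  have hlt : nashProd B v A' < nashProd B v Ostar :=
    (hOstar.2.1 A' hA').lt_of_ne fun heq => (hOstar.2.2 A' hA' heq).not_gt (hclose.trans_le hclose')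
  have hpair := mul_lt_mul_of_prod_lt_prod_of_eqOn (f' := fun h => twoVal B v h (A' h))
    (f := fun h => twoVal B v h (Ostar h)) (mem_univ i) (mem_univ j) hij
    (fun h _ hi hj => ⟨by simp [hval', hval, Ne.symm hi, Ne.symm hj], hpos h⟩) hlt
  have hAi : twoVal B v i (A' i) = twoVal B v i (Ostar i) - 1 + twoVal B v i S := by
    simp [hval', hval, hij.symm]
  have hAj : twoVal B v j (A' j) = twoVal B v j (Ostar j) + 1 - S.card * v := by
    simp [hval', hval, hij, twoVal_of_disjoint B v hSB]
  calc _ ≤ (twoVal B v i (Ostar i) - 1 + twoVal B v i S) *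
        (twoVal B v j (Ostar j) + 1 - S.card * v) :=
        mul_le_mul_of_nonneg_right (by linarith [card_mul_le_twoVal B hv1 i S])
          (hAj ▸ twoVal_nonneg B hv0 j _)
    _ < _ := hAi ▸ hAj ▸ hpair

end NashExchange

lemma floor_ceil_bounds_of_exchange {v X Y : ℚ} {bi bj si sj : ℕ} (hv0 : 0 < v)
    (hX : X = bi + v * si) (hY : Y = bj + v * sj) (hb : bj + 1 ≤ bi)
    (hex : ∀ s ≤ sj, (X - 1 + s * v) * (Y + 1 - s * v) < X * Y) :
    X - 1 + v * ⌊1 / v⌋ < Y ∧ Y < X - 1 + v * ⌈1 / v⌉ := by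
  have key : ∀ s ≤ sj, (1 - s * v) * (X - 1 + s * v - Y) < 0 := fun s hs => by
    linarith [hex s hs, show (X - 1 + s * v) * (Y + 1 - s * v) - X * Y =
      (1 - s * v) * (X - 1 + s * v - Y) by ring]
  have h0 : X - 1 < Y := by simpa using key 0 (Nat.zero_le _)
  -- with `bi = bj + 1`, moving `sj - si` small goods would exactly swap the two values
  have hb2 : bj + 2 ≤ bi := by
    by_contra hb2
    have hbi : (bi : ℚ) = bj + 1 := by exact_mod_cast (show bi = bj + 1 by omega)
    have hsi : si ≤ sj := by
      have : v * si < v * sj := by rw [hX, hY, hbi] at h0; linarith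
      exact_mod_cast (lt_of_mul_lt_mul_left this hv0.le).le
    have := key (sj - si) (Nat.sub_le _ _)
    rw [Nat.cast_sub hsi, hX, hY, hbi] at this
    linarith
  set n := ⌊1 / v⌋₊
  have hn : (n : ℚ) ≤ 1 / v := Nat.floor_le (by positivity)
  have hn' : 1 / v < n + 1 := Nat.lt_floor_add_one _
  have hnsj : n + 1 ≤ sj := by
    have : 1 < v * sj := by
      rw [hX, hY] at h0
      have : (bj : ℚ) + 2 ≤ bi := by exact_mod_cast hb2
      nlinarith [mul_nonneg hv0.le (Nat.cast_nonneg (α := ℚ) si)]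
    have : (n : ℚ) < sj := hn.trans_lt (by rw [div_lt_iff₀ hv0]; linarith)
    exact_mod_cast this
  have hnv : n * v < 1 := by
    refine lt_of_le_of_ne (by rwa [le_div_iff₀ hv0] at hn) fun heq => ?_
    simpa [heq] using key n (by omega)
  have hnv' : 1 < (n + 1) * v := by rwa [div_lt_iff₀ hv0] at hn'
  have hfloor : (⌊1 / v⌋ : ℚ) = n := (natCast_floor_eq_intCast_floor (by positivity)).symm
  have hceil : (⌈1 / v⌉ : ℚ) = n + 1 := by
    have : ⌈1 / v⌉ = (n : ℤ) + 1 := by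
      rw [Int.ceil_eq_iff]
      push_cast
      exact ⟨by rwa [add_sub_cancel_right, lt_div_iff₀ hv0], hn'.le⟩
    exact_mod_cast this
  have hlow := neg_of_mul_neg_right (key n (by omega)) (by linarith)
  have hup := pos_of_mul_neg_right (key (n + 1) hnsj) (by push_cast; linarith)
  push_cast at hup
  rw [hfloor, hceil]
  constructor <;> linarith

/-- Proposition 3.5: bounds on the valuations and numbers of big goods along a
BB-balancing path from an agent `i` with `b_i < b*_i` to an agent `j` with `b*_j < b_j`. -/
theorem stmt3 [Fintype N] [DecidableEq N] [Fintype G] [DecidableEq G]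
    (Bset : N → Finset G) (v : ℚ) (hv0 : 0 < v) (hv1 : v < 1)
    (O Ostar : N → Finset G)
    (hO : DichOptimal Bset O) (hOstar : NashOptimalClosest Bset v O Ostar)
    (i j : N)
    (hi : (O i ∩ Bset i).card < (Ostar i ∩ Bset i).card)
    (hj : (Ostar j ∩ Bset j).card < (O j ∩ Bset j).card)
    (hpath : ExistsBBPath Ostar O Bset i j) :
    (twoVal Bset v i (Ostar i) - 1 + v * (⌊1 / v⌋ : ℚ) < twoVal Bset v j (Ostar j) ∧
      twoVal Bset v j (Ostar j) < twoVal Bset v i (Ostar i) - 1 + v * (⌈1 / v⌉ : ℚ)) ∧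
    (O j ∩ Bset j).card ≤ (O i ∩ Bset i).card + 1 ∧
    (O j ∩ Bset j).card ≤ (Ostar i ∩ Bset i).card := by
  have hOB : ∀ h, O h ⊆ Bset h := hO.1.2.1
  have hij : i ≠ j := by rintro rfl; omega
  obtain ⟨p⟩ := hpath.nonempty_bigGoodsPath hOB
  have hcard := p.card_le_card_add_one hO hij
  simp only [inter_eq_left.2 (hOB i), inter_eq_left.2 (hOB j)] at hi hj ⊢
  have hpos : ∀ h, 0 < twoVal Bset v h (Ostar h) := by
    by_contra! hle
    obtain ⟨h, hh⟩ := hle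
    have h0 : nashProd Bset v Ostar = 0 :=
      prod_eq_zero (mem_univ h) (hh.antisymm (twoVal_nonneg Bset hv0.le h _))
    have hsub := hOstar.subset_of_nashProd_eq_zero hv0.le hO.1.1 h0 j
    exact hj.not_ge (card_le_card (subset_inter hsub (hOB j)))
  refine ⟨floor_ceil_bounds_of_exchange hv0 rfl rfl (by omega) fun s hs => ?_, hcard, by omega⟩
  obtain ⟨S, hS, rfl⟩ := exists_subset_card_eq hs
  exact p.nash_exchange hv0.le hv1.le hOstar hOB hO.1.1 hpos hij hS
end

section
/- Let n ≥ 1, let x > 0 and w > 0 be reals, and let u_1, …, u_n be reals with x ≤ u_i ≤ x + w for all i. Let u = (u_1 + … + u_n)/n and a = (u − x)/w. Then ∏_{i=1}^n u_i ≥ (x + w)^{n·a} · x^{n·(1−a)}, where the exponents are real powers. Equivalently, the geometric mean of the u_i is at least (x+w)^a · x^{1−a}. -/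
/-! Each `u i` is the convex combination `t • (x + w) + (1 - t) • x` with
`t = (u i - x) / w ∈ [0, 1]`, so by weighted AM-GM it dominates `(x + w) ^ t * x ^ (1 - t)`.
Multiplying these bounds, the exponents add up to `n * a` and `n * (1 - a)`. -/

open Finset

namespace Real

lemma rpow_mul_rpow_one_sub_le {x w v : ℝ} (hx : 0 ≤ x) (hw : 0 < w) (hxv : x ≤ v)
    (hvw : v ≤ x + w) :
    (x + w) ^ ((v - x) / w) * x ^ (1 - (v - x) / w) ≤ v := by
  have ht₀ : 0 ≤ (v - x) / w := div_nonneg (by linarith) hw.le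
  have ht₁ : (v - x) / w ≤ 1 := (div_le_one hw).2 (by linarith)
  calc (x + w) ^ ((v - x) / w) * x ^ (1 - (v - x) / w)
      ≤ (v - x) / w * (x + w) + (1 - (v - x) / w) * x :=
        geom_mean_le_arith_mean2_weighted ht₀ (by linarith) (by linarith) hx (by ring)
    _ = v := by field_simp; ring

lemma rpow_mul_rpow_le_prod {ι : Type*} (s : Finset ι) {u : ι → ℝ} {x w : ℝ} (hx : 0 ≤ x)
    (hw : 0 < w) (hu : ∀ i ∈ s, x ≤ u i ∧ u i ≤ x + w) :
    (x + w) ^ ((∑ i ∈ s, u i - #s * x) / w) * x ^ (#s - (∑ i ∈ s, u i - #s * x) / w)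
      ≤ ∏ i ∈ s, u i := by
  have hsum : (∑ i ∈ s, u i - #s * x) / w = ∑ i ∈ s, (u i - x) / w := by
    rw [← sum_div, sum_sub_distrib, sum_const, nsmul_eq_mul]
  have hsum' : (#s : ℝ) - ∑ i ∈ s, (u i - x) / w = ∑ i ∈ s, (1 - (u i - x) / w) := by
    rw [sum_sub_distrib, sum_const, nsmul_eq_mul, mul_one]
  rw [hsum, hsum', rpow_sum_of_nonneg (by linarith)
      (fun i hi ↦ div_nonneg (by linarith [(hu i hi).1]) hw.le),
    rpow_sum_of_nonneg hx (fun i hi ↦ by rw [sub_nonneg, div_le_one hw]; linarith [(hu i hi).2]),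
    ← prod_mul_distrib]
  exact prod_le_prod (fun i _ ↦ by positivity)
    (fun i hi ↦ rpow_mul_rpow_one_sub_le hx hw (hu i hi).1 (hu i hi).2)

end Real

lemma natCast_mul_sum_div_natCast {n : ℕ} (u : Fin n → ℝ) :
    (n : ℝ) * ((∑ i, u i) / n) = ∑ i, u i := by
  rcases n with _ | n
  · simp
  · field_simp

theorem stmt7_general (n : ℕ) (x w : ℝ) (hx : 0 < x) (hw : 0 < w)
    (u : Fin n → ℝ) (hu : ∀ i, x ≤ u i ∧ u i ≤ x + w) :
    (x + w) ^ ((n : ℝ) * (((∑ i, u i) / n - x) / w)) *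
      x ^ ((n : ℝ) * (1 - ((∑ i, u i) / n - x) / w)) ≤ ∏ i, u i := by
  have hexp : (n : ℝ) * (((∑ i, u i) / n - x) / w) = (∑ i, u i - n * x) / w := by
    rw [← mul_div_assoc, mul_sub, natCast_mul_sum_div_natCast]
  rw [mul_one_sub, hexp]
  simpa only [card_univ, Fintype.card_fin] using
    Real.rpow_mul_rpow_le_prod univ hx.le hw (fun i _ ↦ hu i)

/-- AM-GM-type bound: if all `u i` lie in `[x, x + w]` with mean `u`, and
`a = (u - x)/w`, then the product of the `u i` is at least
`(x + w) ^ (n * a) * x ^ (n * (1 - a))` (real powers). -/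
theorem stmt7 (n : ℕ) (hn : 1 ≤ n) (x w : ℝ) (hx : 0 < x) (hw : 0 < w)
    (u : Fin n → ℝ) (hu : ∀ i, x ≤ u i ∧ u i ≤ x + w) :
    (x + w) ^ ((n : ℝ) * (((∑ i, u i) / n - x) / w)) *
      x ^ ((n : ℝ) * (1 - ((∑ i, u i) / n - x) / w)) ≤ ∏ i, u i :=
  stmt7_general n x w hx hw u hu
end

section
/- For every real d with 0 < d < 1, the function a ↦ f(d, a) = a·log(1 + d − a·d) + (1 − a)·log(1 − a·d) is convex on the open interval (0, 1). -/
/-!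
With `u = 1 + d - a d` and `v = 1 - a d` (so `u - v = d`), two differentiations give
`f'' = d² (2 / (u v) - a / u² - (1 - a) / v²) = d² (1 - d² + a (1 - a) d²) / (u² v²)`,
which is nonnegative as soon as `d² ≤ 1` and `0 ≤ a ≤ 1`.
-/

open Real

theorem hasDerivAt_const_sub_mul (c d x : ℝ) : HasDerivAt (fun a => c - a * d) (-d) x := by
  simpa using ((hasDerivAt_id' x).mul_const d).const_sub c

section

variable {d a : ℝ}

theorem hasDerivAt_mul_log_add_one_sub_mul_log (hu : 1 + d - a * d ≠ 0) (hv : 1 - a * d ≠ 0) :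
    HasDerivAt (fun a => a * log (1 + d - a * d) + (1 - a) * log (1 - a * d))
      (log (1 + d - a * d) - log (1 - a * d) - a * d / (1 + d - a * d)
        - (1 - a) * d / (1 - a * d)) a := by
  have hu' := hasDerivAt_const_sub_mul (1 + d) d a
  have hv' := hasDerivAt_const_sub_mul 1 d a
  refine (((hasDerivAt_id' a).fun_mul (hu'.log hu)).fun_add
    (((hasDerivAt_id' a).const_sub 1).fun_mul (hv'.log hv))).congr_deriv ?_
  ring

theorem hasDerivAt_deriv_mul_log_add_one_sub_mul_log (hu : 1 + d - a * d ≠ 0)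
    (hv : 1 - a * d ≠ 0) :
    HasDerivAt (fun a => log (1 + d - a * d) - log (1 - a * d) - a * d / (1 + d - a * d)
        - (1 - a) * d / (1 - a * d))
      (d ^ 2 * (1 - d ^ 2 + a * (1 - a) * d ^ 2) / ((1 + d - a * d) ^ 2 * (1 - a * d) ^ 2)) a := by
  have hu' := hasDerivAt_const_sub_mul (1 + d) d a
  have hv' := hasDerivAt_const_sub_mul 1 d a
  refine ((((hu'.log hu).fun_sub (hv'.log hv)).fun_sub
    (((hasDerivAt_id' a).mul_const d).fun_div hu' hu)).fun_sub
    ((((hasDerivAt_id' a).const_sub 1).mul_const d).fun_div hv' hv)).congr_deriv ?_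
  -- `field_simp` rewrites `a * d` as `d * a` and would then no longer see `hu`, `hv`.
  rw [mul_comm a d] at hu hv ⊢
  field_simp
  ring

theorem one_sub_sq_add_mul_one_sub_mul_sq_nonneg (hd : d ^ 2 ≤ 1) (ha₀ : 0 ≤ a) (ha₁ : a ≤ 1) :
    0 ≤ 1 - d ^ 2 + a * (1 - a) * d ^ 2 := by
  have : 0 ≤ a * (1 - a) * d ^ 2 := by positivity
  linarith

end

/-- For each `d ∈ (0,1)`, the function
`a ↦ a·log(1 + d − a·d) + (1 − a)·log(1 − a·d)` is convex on `(0,1)`. -/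
theorem stmt8 (d : ℝ) (hd0 : 0 < d) (hd1 : d < 1) :
    ConvexOn ℝ (Set.Ioo (0 : ℝ) 1)
      (fun a : ℝ => a * Real.log (1 + d - a * d) + (1 - a) * Real.log (1 - a * d)) := by
  have hpos : ∀ a ∈ Set.Ioo (0 : ℝ) 1, 0 < 1 + d - a * d ∧ 0 < 1 - a * d := by
    rintro a ⟨ha₀, ha₁⟩
    constructor <;> nlinarith
  have hf' := fun a ha ↦ hasDerivAt_mul_log_add_one_sub_mul_log (hpos a ha).1.ne' (hpos a ha).2.ne'
  have hf'' := fun a ha ↦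
    hasDerivAt_deriv_mul_log_add_one_sub_mul_log (hpos a ha).1.ne' (hpos a ha).2.ne'
  refine convexOn_of_hasDerivWithinAt2_nonneg (convex_Ioo 0 1)
    (continuousOn_of_forall_continuousAt fun a ha ↦ (hf' a ha).continuousAt)
    (fun a ha ↦ (hf' a (interior_subset ha)).hasDerivWithinAt)
    (fun a ha ↦ (hf'' a (interior_subset ha)).hasDerivWithinAt) ?_
  rw [interior_Ioo]
  rintro a ⟨ha₀, ha₁⟩
  have hd : d ^ 2 ≤ 1 := by nlinarith
  have := one_sub_sq_add_mul_one_sub_mul_sq_nonneg hd ha₀.le ha₁.le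
  positivity
end

section
/- The function g(d) = log((6 + 3d − d²)/(6 − 3d − d²)) + 12d·(d² − 3)/(d⁴ − 21d² + 36) is nonincreasing on the open interval (0, 1): for all 0 < d₁ ≤ d₂ < 1 one has g(d₂) ≤ g(d₁). -/
/-!
Since `d⁴ − 21d² + 36 = (6 + 3d − d²)(6 − 3d − d²)`, differentiating `g` and clearing
denominators collapses everything to `g'(d) = −6d⁴(d² + 39)/(d⁴ − 21d² + 36)² ≤ 0`.
-/

noncomputable def g (x : ℝ) : ℝ :=
  Real.log ((6 + 3 * x - x ^ 2) / (6 - 3 * x - x ^ 2)) +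
    12 * x * (x ^ 2 - 3) / (x ^ 4 - 21 * x ^ 2 + 36)

lemma quartic_eq_mul (x : ℝ) :
    x ^ 4 - 21 * x ^ 2 + 36 = (6 + 3 * x - x ^ 2) * (6 - 3 * x - x ^ 2) := by
  ring

lemma hasDerivAt_g {x : ℝ} (hA : 6 + 3 * x - x ^ 2 ≠ 0) (hB : 6 - 3 * x - x ^ 2 ≠ 0) :
    HasDerivAt g (-(6 * x ^ 4 * (x ^ 2 + 39)) / (x ^ 4 - 21 * x ^ 2 + 36) ^ 2) x := by
  have hP : x ^ 4 - 21 * x ^ 2 + 36 ≠ 0 := by rw [quartic_eq_mul]; exact mul_ne_zero hA hB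
  have dA : HasDerivAt (fun y : ℝ => 6 + 3 * y - y ^ 2) (3 - 2 * x) x :=
    (((hasDerivAt_id' x).const_mul 3).const_add 6 |>.sub (hasDerivAt_pow 2 x)).congr_deriv
      (by ring)
  have dB : HasDerivAt (fun y : ℝ => 6 - 3 * y - y ^ 2) (-3 - 2 * x) x :=
    (((hasDerivAt_id' x).const_mul 3).const_sub 6 |>.sub (hasDerivAt_pow 2 x)).congr_deriv
      (by ring)
  have dN : HasDerivAt (fun y : ℝ => 12 * y * (y ^ 2 - 3)) (36 * x ^ 2 - 36) x :=
    (((hasDerivAt_id' x).const_mul 12).mul ((hasDerivAt_pow 2 x).sub_const 3)).congr_deriv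
      (by ring)
  have dP : HasDerivAt (fun y : ℝ => y ^ 4 - 21 * y ^ 2 + 36) (4 * x ^ 3 - 42 * x) x :=
    (((hasDerivAt_pow 4 x).sub ((hasDerivAt_pow 2 x).const_mul 21)).add_const 36).congr_deriv
      (by ring)
  refine (((dA.div dB hB).log (div_ne_zero hA hB)).add (dN.div dP hP)).congr_deriv ?_
  simp only [Pi.div_apply]
  rw [quartic_eq_mul]
  field_simp
  ring

lemma g_antitoneOn : AntitoneOn g (Set.Icc (-1) 1) := by
  have hderiv : ∀ x ∈ Set.Icc (-1 : ℝ) 1,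
      HasDerivAt g (-(6 * x ^ 4 * (x ^ 2 + 39)) / (x ^ 4 - 21 * x ^ 2 + 36) ^ 2) x :=
    fun x ⟨h₁, h₂⟩ => hasDerivAt_g (by nlinarith) (by nlinarith)
  refine antitoneOn_of_hasDerivWithinAt_nonpos (convex_Icc _ _)
    (fun x hx => (hderiv x hx).continuousAt.continuousWithinAt)
    (fun x hx => (hderiv x (interior_subset hx)).hasDerivWithinAt) fun x _ => ?_
  exact div_nonpos_of_nonpos_of_nonneg (neg_nonpos.mpr (by positivity)) (sq_nonneg _)

/-- The function `g(d) = log((6 + 3d − d²)/(6 − 3d − d²)) + 12d(d² − 3)/(d⁴ − 21d² + 36)`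
is nonincreasing on `(0, 1)`. -/
theorem stmt9 (d₁ d₂ : ℝ) (h0 : 0 < d₁) (h12 : d₁ ≤ d₂) (h1 : d₂ < 1) :
    Real.log ((6 + 3 * d₂ - d₂ ^ 2) / (6 - 3 * d₂ - d₂ ^ 2)) +
        12 * d₂ * (d₂ ^ 2 - 3) / (d₂ ^ 4 - 21 * d₂ ^ 2 + 36) ≤
      Real.log ((6 + 3 * d₁ - d₁ ^ 2) / (6 - 3 * d₁ - d₁ ^ 2)) +
        12 * d₁ * (d₁ ^ 2 - 3) / (d₁ ^ 4 - 21 * d₁ ^ 2 + 36) :=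
  g_antitoneOn ⟨by linarith, by linarith⟩ ⟨by linarith, h1.le⟩ h12
end

section
/- For all reals d, a with 0 < d < 1 and 0 < a < 1, one has f(d, a) ≥ log(1 + d/2 − d²/6) + 2d(3 − d)(d² − 3)/(d⁴ − 21d² + 36). -/
/-!
For fixed `d`, the map `a ↦ f(d, a)` is convex on `[0, 1]`: its second derivative is
`d² (1 - d² (1 - a + a²)) / ((1 + d - a d)(1 - a d))²`. At `a₀ = 1/2 + d/6` the two logarithms
become `log y` and `log x` with `y, x = 1 ± d/2 - d²/6`, and the slope there is
`log (y/x) - d (a₀/y + (1 - a₀)/x)`, which is nonpositive by the estimate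
`log ((1 + r)/(1 - r)) ≤ 2r + 2r³/(3(1 - r²))` for `r = (y - x)/(y + x)`. So `f(d, ·)` lies above
its tangent line at `a₀`, which is decreasing, hence above the value of that line at `a = 1`;
this value is the claimed lower bound.
-/

open Real Set

lemma log_one_add_sub_log_one_sub_le {r : ℝ} (h0 : 0 ≤ r) (h1 : r < 1) :
    log (1 + r) - log (1 - r) ≤ 2 * r + 2 * r ^ 3 / (3 * (1 - r ^ 2)) := by
  have hr2 : r ^ 2 < 1 := by nlinarith
  have hseries := hasSum_log_sub_log_of_abs_lt_one (abs_lt.mpr ⟨by linarith, h1⟩)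
  have hmajorant : HasSum (fun k : ℕ => 2 / 3 * r * (r ^ 2) ^ k + if k = 0 then 4 / 3 * r else 0)
      (2 / 3 * r * (1 - r ^ 2)⁻¹ + 4 / 3 * r) :=
    ((hasSum_geometric_of_lt_one (sq_nonneg r) hr2).mul_left _).add (hasSum_ite_eq 0 _)
  have hsum : 2 / 3 * r * (1 - r ^ 2)⁻¹ + 4 / 3 * r = 2 * r + 2 * r ^ 3 / (3 * (1 - r ^ 2)) := by
    field_simp [(sub_pos.mpr hr2).ne']
    ring
  refine hsum ▸ hasSum_le (fun k => ?_) hseries hmajorant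
  have hpow : r ^ (2 * k + 1) = r * (r ^ 2) ^ k := by ring
  rcases Nat.eq_zero_or_pos k with rfl | hk
  · norm_num
    linarith
  · have hcoef : 2 * (1 / (2 * (k : ℝ) + 1)) ≤ 2 / 3 := by
      rw [mul_one_div, div_le_div_iff₀ (by positivity) (by norm_num)]
      have : (1 : ℝ) ≤ k := by exact_mod_cast hk
      linarith
    have := mul_le_mul_of_nonneg_right hcoef (by positivity : 0 ≤ r * (r ^ 2) ^ k)
    rw [if_neg hk.ne', hpow]
    linarith

lemma log_sub_log_le {x y : ℝ} (hx : 0 < x) (hxy : x ≤ y) :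
    log y - log x ≤ 2 * (y - x) / (y + x) + (y - x) ^ 3 / (6 * (x * y) * (y + x)) := by
  have hy : 0 < y := hx.trans_le hxy
  have hs : 0 < y + x := by positivity
  have hr0 : 0 ≤ (y - x) / (y + x) := div_nonneg (sub_nonneg.mpr hxy) hs.le
  have hr1 : (y - x) / (y + x) < 1 := (div_lt_one hs).mpr (by linarith)
  have hratio : (1 + (y - x) / (y + x)) / (1 - (y - x) / (y + x)) = y / x := by
    field_simp [hx.ne']
    ring
  have hbound : 2 * ((y - x) / (y + x)) + 2 * ((y - x) / (y + x)) ^ 3 / (3 * (1 - ((y - x) / (y + x)) ^ 2))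
      = 2 * (y - x) / (y + x) + (y - x) ^ 3 / (6 * (x * y) * (y + x)) := by
    have h1r : 1 - ((y - x) / (y + x)) ^ 2 = 4 * (x * y) / (y + x) ^ 2 := by
      field_simp
      ring
    rw [h1r]
    field_simp
    ring
  have h := log_one_add_sub_log_one_sub_le hr0 hr1
  rwa [← log_div (by linarith) (by linarith), hratio, log_div hy.ne' hx.ne', hbound] at h

lemma ConvexOn.add_mul_sub_le_of_hasDerivAt {S : Set ℝ} {f : ℝ → ℝ} {x y f' : ℝ}
    (hf : ConvexOn ℝ S f) (hx : x ∈ S) (hy : y ∈ S) (hfx : HasDerivAt f f' x) :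
    f x + f' * (y - x) ≤ f y := by
  rcases lt_trichotomy x y with hxy | rfl | hyx
  · have := hf.le_slope_of_hasDerivAt hx hy hxy hfx
    rw [slope_def_field, le_div_iff₀ (sub_pos.mpr hxy)] at this
    linarith
  · simp
  · have := hf.slope_le_of_hasDerivAt hy hx hyx hfx
    rw [slope_def_field, div_le_iff₀ (sub_pos.mpr hyx)] at this
    linarith

noncomputable def mixedLog (d a : ℝ) : ℝ :=
  a * log (1 + d - a * d) + (1 - a) * log (1 - a * d)

noncomputable def mixedLogDeriv (d a : ℝ) : ℝ :=
  log (1 + d - a * d) - log (1 - a * d) - d * (a / (1 + d - a * d) + (1 - a) / (1 - a * d))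

section
variable {d a : ℝ}

lemma hasDerivAt_mixedLog (hu : 1 + d - a * d ≠ 0) (hv : 1 - a * d ≠ 0) :
    HasDerivAt (mixedLog d) (mixedLogDeriv d a) a := by
  have hu' : HasDerivAt (fun a => 1 + d - a * d) (-d) a := by
    simpa using ((hasDerivAt_id a).mul_const d).const_sub (1 + d)
  have hv' : HasDerivAt (fun a => 1 - a * d) (-d) a := by
    simpa using ((hasDerivAt_id a).mul_const d).const_sub 1
  have := ((hasDerivAt_id a).mul (hu'.log hu)).add
    (((hasDerivAt_id a).const_sub 1).mul (hv'.log hv))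
  refine this.congr_deriv ?_
  simp only [mixedLogDeriv, id]
  ring

lemma hasDerivAt_mixedLogDeriv (hu : 1 + d - a * d ≠ 0) (hv : 1 - a * d ≠ 0) :
    HasDerivAt (mixedLogDeriv d)
      (d ^ 2 * (1 - d ^ 2 * (1 - a + a ^ 2)) / ((1 + d - a * d) * (1 - a * d)) ^ 2) a := by
  have hu' : HasDerivAt (fun a => 1 + d - a * d) (-d) a := by
    simpa using ((hasDerivAt_id a).mul_const d).const_sub (1 + d)
  have hv' : HasDerivAt (fun a => 1 - a * d) (-d) a := by
    simpa using ((hasDerivAt_id a).mul_const d).const_sub 1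
  have := ((hu'.log hu).sub (hv'.log hv)).sub
    ((((hasDerivAt_id a).div hu' hu).add (((hasDerivAt_id a).const_sub 1).div hv' hv)).const_mul d)
  refine this.congr_deriv ?_
  -- `field_simp` rewrites `a * d` as `d * a` and would then miss `hu` and `hv`.
  rw [mul_comm a d] at hu hv ⊢
  simp only [id]
  field_simp
  ring

lemma convexOn_mixedLog (hd : |d| < 1) : ConvexOn ℝ (Icc 0 1) (mixedLog d) := by
  obtain ⟨hd₁, hd₂⟩ := abs_lt.mp hd
  have hu : ∀ a ∈ Icc (0 : ℝ) 1, 0 < 1 + d - a * d := fun a ⟨h₀, h₁⟩ => by nlinarith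
  have hv : ∀ a ∈ Icc (0 : ℝ) 1, 0 < 1 - a * d := fun a ⟨h₀, h₁⟩ => by nlinarith
  have hderiv a (ha : a ∈ Icc (0 : ℝ) 1) := hasDerivAt_mixedLog (hu a ha).ne' (hv a ha).ne'
  have hderiv2 a (ha : a ∈ Icc (0 : ℝ) 1) := hasDerivAt_mixedLogDeriv (hu a ha).ne' (hv a ha).ne'
  refine convexOn_of_hasDerivWithinAt2_nonneg (convex_Icc 0 1)
    (fun a ha => (hderiv a ha).continuousAt.continuousWithinAt)
    (fun a ha => (hderiv a (interior_subset ha)).hasDerivWithinAt)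
    (fun a ha => (hderiv2 a (interior_subset ha)).hasDerivWithinAt) fun a ha => ?_
  rw [interior_Icc] at ha
  obtain ⟨h₀, h₁⟩ := ha
  have : 0 ≤ 1 - d ^ 2 * (1 - a + a ^ 2) := by nlinarith [mul_pos h₀ (sub_pos.mpr h₁)]
  positivity

lemma mixedLogDeriv_nonpos (hd0 : 0 ≤ d) (hd1 : d < 1) :
    mixedLogDeriv d (1 / 2 + d / 6) ≤ 0 := by
  have hx : 0 < 1 - d / 2 - d ^ 2 / 6 := by nlinarith
  have hy : 0 < 1 + d / 2 - d ^ 2 / 6 := by nlinarith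
  have hs : 0 < 2 - d ^ 2 / 3 := by nlinarith
  have hlog := log_sub_log_le (y := 1 + d / 2 - d ^ 2 / 6) hx (by linarith)
  have hbound : 2 * d / (2 - d ^ 2 / 3)
        + d ^ 3 / (6 * ((1 - d / 2 - d ^ 2 / 6) * (1 + d / 2 - d ^ 2 / 6)) * (2 - d ^ 2 / 3)) ≤
      d * ((1 / 2 + d / 6) / (1 + d / 2 - d ^ 2 / 6)
        + (1 - (1 / 2 + d / 6)) / (1 - d / 2 - d ^ 2 / 6)) := by
    rw [div_add_div _ _ (by positivity) (by positivity), div_add_div _ _ hy.ne' hx.ne',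
      mul_div_assoc', div_le_div_iff₀ (by positivity) (by positivity), ← sub_nonneg]
    have : 0 ≤ d ^ 5 * (1 - d / 2 - d ^ 2 / 6) * (1 + d / 2 - d ^ 2 / 6) * (2 - d ^ 2 / 3) := by
      positivity
    linear_combination this / 3
  have hu : 1 + d - (1 / 2 + d / 6) * d = 1 + d / 2 - d ^ 2 / 6 := by ring
  have hv : 1 - (1 / 2 + d / 6) * d = 1 - d / 2 - d ^ 2 / 6 := by ring
  have hdiff : 1 + d / 2 - d ^ 2 / 6 - (1 - d / 2 - d ^ 2 / 6) = d := by ring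
  have hsum : 1 + d / 2 - d ^ 2 / 6 + (1 - d / 2 - d ^ 2 / 6) = 2 - d ^ 2 / 3 := by ring
  rw [hdiff, hsum] at hlog
  simp only [mixedLogDeriv, hu, hv]
  linarith

lemma mixedLog_add_mixedLogDeriv_mul_eq (hx : 1 - d / 2 - d ^ 2 / 6 ≠ 0)
    (hy : 1 + d / 2 - d ^ 2 / 6 ≠ 0) :
    mixedLog d (1 / 2 + d / 6) + mixedLogDeriv d (1 / 2 + d / 6) * (1 - (1 / 2 + d / 6)) =
      log (1 + d / 2 - d ^ 2 / 6) + 2 * d * (3 - d) * (d ^ 2 - 3) / (d ^ 4 - 21 * d ^ 2 + 36) := by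
  have hu : 1 + d - (1 / 2 + d / 6) * d = 1 + d / 2 - d ^ 2 / 6 := by ring
  have hv : 1 - (1 / 2 + d / 6) * d = 1 - d / 2 - d ^ 2 / 6 := by ring
  have hD : d ^ 4 - 21 * d ^ 2 + 36 = 36 * ((1 + d / 2 - d ^ 2 / 6) * (1 - d / 2 - d ^ 2 / 6)) := by
    ring
  simp only [mixedLog, mixedLogDeriv, hu, hv, hD]
  -- `field_simp` only clears these denominators once they are atoms.
  generalize hX : 1 - d / 2 - d ^ 2 / 6 = x at hx ⊢
  generalize hY : 1 + d / 2 - d ^ 2 / 6 = y at hy ⊢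
  field_simp
  subst hX hY
  ring

end

/-- Lower bound on `f(d, a) = a·log(1 + d − a·d) + (1 − a)·log(1 − a·d)` for
`d, a ∈ (0,1)`: `f(d, a) ≥ log(1 + d/2 − d²/6) + 2d(3 − d)(d² − 3)/(d⁴ − 21d² + 36)`. -/
theorem stmt10 (d a : ℝ) (hd0 : 0 < d) (hd1 : d < 1) (ha0 : 0 < a) (ha1 : a < 1) :
    Real.log (1 + d / 2 - d ^ 2 / 6) +
        2 * d * (3 - d) * (d ^ 2 - 3) / (d ^ 4 - 21 * d ^ 2 + 36) ≤
      a * Real.log (1 + d - a * d) + (1 - a) * Real.log (1 - a * d) := by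
  have hx : 0 < 1 - d / 2 - d ^ 2 / 6 := by nlinarith
  have hy : 0 < 1 + d / 2 - d ^ 2 / 6 := by nlinarith
  have htangent := (convexOn_mixedLog (abs_lt.mpr ⟨by linarith, hd1⟩)).add_mul_sub_le_of_hasDerivAt
    ⟨by linarith, by linarith⟩ ⟨ha0.le, ha1.le⟩
    (hasDerivAt_mixedLog (a := 1 / 2 + d / 6) (by nlinarith) (by nlinarith))
  have hslope := mixedLogDeriv_nonpos hd0.le hd1
  rw [← mixedLog_add_mixedLogDeriv_mul_eq hx.ne' hy.ne']
  calc _ ≤ mixedLog d (1 / 2 + d / 6) + mixedLogDeriv d (1 / 2 + d / 6) * (a - (1 / 2 + d / 6)) := by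
        nlinarith
    _ ≤ mixedLog d a := htangent
end

section
/- The function h(d) = log(1 + d/2 − d²/6) + 2d(3 − d)(d² − 3)/(d⁴ − 21d² + 36) is nonincreasing on the open interval (0, 1): for all 0 < d₁ ≤ d₂ < 1 one has h(d₂) ≤ h(d₁). -/
/-!
With `u = 1 + d/2 - d²/6`, `N = 2d(3 - d)(d² - 3)` and `D = d⁴ - 21d² + 36`, the numerator
`u'D² + u(N'D - ND')` of `h' = u'/u + (N/D)'` turns out to be divisible by `u`, leaving
`h'(d) = d q(d) / D(d)²` with `q(d) = 2d⁶ - 3d⁵ + 9d⁴ - 117d³ + 225d² - 324`.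
On `[0, 1]` the positive part of `q` is at most `2 + 9 + 225 < 324`, so `h' ≤ 0` there.
-/

open Set

noncomputable def h (d : ℝ) : ℝ :=
  Real.log (1 + d / 2 - d ^ 2 / 6) + 2 * d * (3 - d) * (d ^ 2 - 3) / (d ^ 4 - 21 * d ^ 2 + 36)

lemma h_log_arg_pos {x : ℝ} (hx : |x| ≤ 1) : 0 < 1 + x / 2 - x ^ 2 / 6 := by
  obtain ⟨hx₁, hx₂⟩ := abs_le.mp hx
  nlinarith

lemma h_denom_pos {x : ℝ} (hx : |x| ≤ 1) : 0 < x ^ 4 - 21 * x ^ 2 + 36 := by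
  have hsq : x ^ 2 ≤ 1 := by simpa using pow_le_pow_left₀ (abs_nonneg x) hx 2
  nlinarith [sq_nonneg (x ^ 2)]

lemma hasDerivAt_h {x : ℝ} (hu : 1 + x / 2 - x ^ 2 / 6 ≠ 0) (hD : x ^ 4 - 21 * x ^ 2 + 36 ≠ 0) :
    HasDerivAt h
      (x * (2 * x ^ 6 - 3 * x ^ 5 + 9 * x ^ 4 - 117 * x ^ 3 + 225 * x ^ 2 - 324) /
        (x ^ 4 - 21 * x ^ 2 + 36) ^ 2) x := by
  have hu' : HasDerivAt (fun d : ℝ => 1 + d / 2 - d ^ 2 / 6) (1 / 2 - x / 3) x :=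
    ((((hasDerivAt_id x).div_const 2).const_add 1).sub
      ((hasDerivAt_pow 2 x).div_const 6)).congr_deriv (by ring)
  have hN' : HasDerivAt (fun d : ℝ => 2 * d * (3 - d) * (d ^ 2 - 3))
      (-8 * x ^ 3 + 18 * x ^ 2 + 12 * x - 18) x :=
    ((((hasDerivAt_id x).const_mul 2).mul ((hasDerivAt_id x).const_sub 3)).mul
      ((hasDerivAt_pow 2 x).sub_const 3)).congr_deriv (by simp only [id, Pi.mul_apply]; ring)
  have hD' : HasDerivAt (fun d : ℝ => d ^ 4 - 21 * d ^ 2 + 36) (4 * x ^ 3 - 42 * x) x :=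
    (((hasDerivAt_pow 4 x).sub ((hasDerivAt_pow 2 x).const_mul 21)).add_const 36).congr_deriv
      (by ring)
  refine ((hu'.log hu).add (hN'.div hD' hD)).congr_deriv ?_
  rw [div_add_div _ _ hu (pow_ne_zero 2 hD), div_eq_div_iff (mul_ne_zero hu (pow_ne_zero 2 hD))
    (pow_ne_zero 2 hD)]
  ring

lemma h_deriv_factor_neg {x : ℝ} (hx₀ : 0 ≤ x) (hx₁ : x ≤ 1) :
    2 * x ^ 6 - 3 * x ^ 5 + 9 * x ^ 4 - 117 * x ^ 3 + 225 * x ^ 2 - 324 < 0 := by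
  have h2 : x ^ 2 ≤ 1 := pow_le_one₀ hx₀ hx₁
  have h4 : x ^ 4 ≤ 1 := pow_le_one₀ hx₀ hx₁
  have h6 : x ^ 6 ≤ 1 := pow_le_one₀ hx₀ hx₁
  nlinarith [pow_nonneg hx₀ 3, pow_nonneg hx₀ 5]

lemma antitoneOn_h : AntitoneOn h (Icc 0 1) := by
  have hderiv (x : ℝ) (hx : x ∈ Icc (0 : ℝ) 1) :=
    have hx : |x| ≤ 1 := abs_le.mpr ⟨by linarith [hx.1], hx.2⟩
    hasDerivAt_h (h_log_arg_pos hx).ne' (h_denom_pos hx).ne'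
  refine antitoneOn_of_hasDerivWithinAt_nonpos (convex_Icc 0 1)
    (fun x hx => (hderiv x hx).continuousAt.continuousWithinAt)
    (fun x hx => (hderiv x (interior_subset hx)).hasDerivWithinAt) fun x hx => ?_
  rw [interior_Icc] at hx
  exact div_nonpos_of_nonpos_of_nonneg
    (mul_nonpos_of_nonneg_of_nonpos hx.1.le (h_deriv_factor_neg hx.1.le hx.2.le).le) (sq_nonneg _)

/-- The function `h(d) = log(1 + d/2 − d²/6) + 2d(3 − d)(d² − 3)/(d⁴ − 21d² + 36)`
is nonincreasing on `(0, 1)`. -/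
theorem stmt11 (d₁ d₂ : ℝ) (h0 : 0 < d₁) (h12 : d₁ ≤ d₂) (h1 : d₂ < 1) :
    Real.log (1 + d₂ / 2 - d₂ ^ 2 / 6) +
        2 * d₂ * (3 - d₂) * (d₂ ^ 2 - 3) / (d₂ ^ 4 - 21 * d₂ ^ 2 + 36) ≤
      Real.log (1 + d₁ / 2 - d₁ ^ 2 / 6) +
        2 * d₁ * (3 - d₁) * (d₁ ^ 2 - 3) / (d₁ ^ 4 - 21 * d₁ ^ 2 + 36) :=
  antitoneOn_h ⟨h0.le, (h12.trans_lt h1).le⟩ ⟨(h0.trans_le h12).le, h1.le⟩ h12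
end

section
/- For all reals d, a with 0 < d ≤ 1/2 and 0 < a < 1, one has f(d, a) ≥ log(29/24) − 110/493. -/
/-!
Both arguments of the logarithms in `f(d, a)` are affine in `d` and equal `1` at `d = 0`, so
concavity of `log` gives `f(d, a) ≥ 2d · f(1/2, a)`, which is at least `min(0, f(1/2, a))` for
`0 < d ≤ 1/2`. The one-variable function `f(1/2, a)` (minimum `≈ -0.0333`) is bounded below by
replacing each logarithm with its degree-6 Taylor polynomial minus the remainder bound, which
leaves a polynomial inequality in `a`; the same Taylor estimate bounds `log (29/24)` from above.
-/

open Real Finset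

noncomputable def logMix (d a : ℝ) : ℝ :=
  a * log (1 + d - a * d) + (1 - a) * log (1 - a * d)

noncomputable def logOneSubTaylor (x : ℝ) : ℝ :=
  -∑ i ∈ range 6, x ^ (i + 1) / (i + 1)

lemma abs_log_one_sub_sub_logOneSubTaylor_le {x : ℝ} (hx : |x| ≤ 1 / 2) :
    |log (1 - x) - logOneSubTaylor x| ≤ 2 * |x| ^ 7 := by
  have h := abs_log_sub_add_sum_range_le (hx.trans_lt (by norm_num)) 6
  have hden : |x| ^ 7 / (1 - |x|) ≤ 2 * |x| ^ 7 := by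
    rw [div_le_iff₀ (by linarith)]
    nlinarith [pow_nonneg (abs_nonneg x) 7]
  rw [logOneSubTaylor, sub_neg_eq_add, add_comm]
  exact h.trans hden

lemma mul_log_le_log_one_sub_add_mul {t y : ℝ} (ht0 : 0 ≤ t) (ht1 : t ≤ 1) (hy : 0 < y) :
    t * log y ≤ log (1 - t + t * y) := by
  have h := strictConcaveOn_log_Ioi.concaveOn.2 (Set.mem_Ioi.2 one_pos) hy
    (sub_nonneg.2 ht1) ht0 (sub_add_cancel 1 t)
  simpa only [smul_eq_mul, mul_one, log_one, mul_zero, zero_add] using h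

lemma two_mul_logMix_half_le_logMix {d a : ℝ} (hd0 : 0 ≤ d) (hd : d ≤ 1 / 2)
    (ha0 : 0 ≤ a) (ha1 : a ≤ 1) :
    2 * d * logMix (1 / 2) a ≤ logMix d a := by
  have hplus := mul_log_le_log_one_sub_add_mul (t := 2 * d) (y := 1 + 1 / 2 - a * (1 / 2))
    (by linarith) (by linarith) (by linarith)
  have hminus := mul_log_le_log_one_sub_add_mul (t := 2 * d) (y := 1 - a * (1 / 2))
    (by linarith) (by linarith) (by linarith)
  rw [show 1 - 2 * d + 2 * d * (1 + 1 / 2 - a * (1 / 2)) = 1 + d - a * d by ring] at hplus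
  rw [show 1 - 2 * d + 2 * d * (1 - a * (1 / 2)) = 1 - a * d by ring] at hminus
  unfold logMix
  nlinarith [mul_le_mul_of_nonneg_left hplus ha0,
    mul_le_mul_of_nonneg_left hminus (sub_nonneg.2 ha1)]

/- The constant is the Taylor upper bound for `log (29/24)` of `log_29_24_le` minus `110/493`;
the polynomial on the right stays about `4 · 10⁻⁴` above it. -/
lemma le_logMix_half_taylor_minorant (a : ℝ) :
    (-12756440075 : ℝ) / 376855068672 ≤
      a * (logOneSubTaylor (-(1 - a) / 2) - 2 * ((1 - a) / 2) ^ 7)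
        + (1 - a) * (logOneSubTaylor (a / 2) - 2 * (a / 2) ^ 7) := by
  simp only [logOneSubTaylor, sum_range_succ, sum_range_zero]
  norm_num
  nlinarith [sq_nonneg ((a - 3 / 5) ^ 2), sq_nonneg (a * (a - 3 / 5)),
    sq_nonneg ((1 - a) * (a - 3 / 5)), sq_nonneg (a ^ 2 - 3 / 5)]

lemma le_logMix_half {a : ℝ} (ha0 : 0 ≤ a) (ha1 : a ≤ 1) :
    (-12756440075 : ℝ) / 376855068672 ≤ logMix (1 / 2) a := by
  have hplus := (abs_le.1 (abs_log_one_sub_sub_logOneSubTaylor_le (x := -(1 - a) / 2)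
    (by rw [abs_of_nonpos (by linarith)]; linarith))).1
  have hminus := (abs_le.1 (abs_log_one_sub_sub_logOneSubTaylor_le (x := a / 2)
    (by rw [abs_of_nonneg (by linarith)]; linarith))).1
  rw [abs_of_nonpos (by linarith), show -(-(1 - a) / 2) = (1 - a) / 2 by ring,
    show 1 - -(1 - a) / 2 = 1 + 1 / 2 - a * (1 / 2) by ring] at hplus
  rw [abs_of_nonneg (by linarith), show 1 - a / 2 = 1 - a * (1 / 2) by ring] at hminus
  unfold logMix
  nlinarith [le_logMix_half_taylor_minorant a, mul_le_mul_of_nonneg_left hplus ha0,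
    mul_le_mul_of_nonneg_left hminus (sub_nonneg.2 ha1)]

lemma log_29_24_le : log (29 / 24) ≤ (-12756440075 : ℝ) / 376855068672 + 110 / 493 := by
  have h := (abs_le.1 (abs_log_one_sub_sub_logOneSubTaylor_le (x := -5 / 24)
    (by norm_num [abs_of_nonpos]))).2
  norm_num [logOneSubTaylor, sum_range_succ, abs_of_nonpos] at h ⊢
  linarith

/-- For `0 < d ≤ 1/2` and `0 < a < 1`,
`a·log(1 + d − a·d) + (1 − a)·log(1 − a·d) ≥ log(29/24) − 110/493`. -/
theorem stmt12 (d a : ℝ) (hd0 : 0 < d) (hd : d ≤ 1 / 2) (ha0 : 0 < a) (ha1 : a < 1) :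
    Real.log (29 / 24) - 110 / 493 ≤
      a * Real.log (1 + d - a * d) + (1 - a) * Real.log (1 - a * d) := by
  change _ ≤ logMix d a
  have hC : Real.log (29 / 24) - 110 / 493 ≤ (-12756440075 : ℝ) / 376855068672 := by
    linarith [log_29_24_le]
  calc Real.log (29 / 24) - 110 / 493
      ≤ 2 * d * ((-12756440075 : ℝ) / 376855068672) := by nlinarith
    _ ≤ 2 * d * logMix (1 / 2) a := by gcongr; exact le_logMix_half ha0.le ha1.le
    _ ≤ logMix d a := two_mul_logMix_half_le_logMix hd0.le hd ha0.le ha1.le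
end

section
/- Let I = {0,…,4} × {0,…,6} and for (i,j) ∈ I set u_{ij} = i + (4/5)·j. Suppose x : I → ℝ and α ∈ ℝ satisfy: x_{ij} ≥ 0 for all (i,j) ∈ I; 0 ≤ α ≤ 1; ∑_{(i,j)∈I} x_{ij} = 1; ∑_{j=0}^{6} x_{4j} ≤ 53/162; ∑_{(i,j)∈I} i·x_{ij} ≤ (4/3)·(1 − α); and ∑_{(i,j)∈I} j·x_{ij} ≤ 10/3 + (4/3)·α. Then ∑_{(i,j)∈I} x_{ij}·log(u_{ij}) ≤ (1/162)·(log(21/5) + log(19/5)) + (160/162)·log 4. -/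
/-!
LP weak duality. The optimum puts mass `1/162` on `u = 21/5` at `(1, 4)` and on `u = 19/5` at
`(3, 1)`, and the remaining `160/162` on `u = 4`, split `107 : 53` between `(0, 5)` and `(4, 0)`.
The dual variables `λ, β, γ, μ` of the constraints on `∑ x`, `∑ i x`, `∑ j x` and `∑ x_{4j}` are
fixed by complementary slackness at these four points, and they are logarithms of rationals, so
dual feasibility `log u_{ij} ≤ λ + β i + γ j + [i = 4] μ` becomes a finite check of rational
inequalities `u_{ij} ≤ e^λ (e^β)^i (e^γ)^j (e^μ)^[i = 4]`; these weights are all `≥ 1`, which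
covers `log 0 = 0` at `(0, 0)`. Since `β ≥ γ`, the worst case is `α = 0`.
-/

open Finset

theorem Fintype.sum_prod_ite_fst_eq {α β M : Type*} [Fintype α] [Fintype β] [DecidableEq α]
    [AddCommMonoid M] (x : α × β → M) (a : α) :
    ∑ p : α × β, (if p.1 = a then x p else 0) = ∑ b, x (a, b) := by
  rw [Fintype.sum_prod_type, Fintype.sum_eq_single a fun a' ha' => by simp [ha']]
  simp

theorem Real.log_le_log_of_le_of_one_le {u w : ℝ} (hu : 0 ≤ u) (huw : u ≤ w) (hw : 1 ≤ w) :
    Real.log u ≤ Real.log w := by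
  rcases hu.eq_or_lt with rfl | hu
  · simpa using Real.log_nonneg hw
  · exact Real.log_le_log hu huw

theorem sum_mul_le_of_dual_feasible {m n : ℕ} {x f : Fin m × Fin n → ℝ} {r : Fin m}
    {α b c s lam β γ μ : ℝ} (hx : ∀ p, 0 ≤ x p) (hα : 0 ≤ α) (hb : 0 ≤ b)
    (hsum : ∑ p, x p = 1) (hrow : ∑ j, x (r, j) ≤ s)
    (hfst : ∑ p : Fin m × Fin n, ((p.1 : ℕ) : ℝ) * x p ≤ b * (1 - α))
    (hsnd : ∑ p : Fin m × Fin n, ((p.2 : ℕ) : ℝ) * x p ≤ c + b * α)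
    (hμ : 0 ≤ μ) (hγ : 0 ≤ γ) (hγβ : γ ≤ β)
    (hf : ∀ p, f p ≤ lam + β * (p.1 : ℕ) + γ * (p.2 : ℕ) + if p.1 = r then μ else 0) :
    ∑ p, x p * f p ≤ lam + b * β + c * γ + s * μ := by
  have hexpand : ∑ p, x p * (lam + β * (p.1 : ℕ) + γ * (p.2 : ℕ) + if p.1 = r then μ else 0) =
      lam * ∑ p, x p + β * ∑ p : Fin m × Fin n, ((p.1 : ℕ) : ℝ) * x p +
        γ * ∑ p : Fin m × Fin n, ((p.2 : ℕ) : ℝ) * x p + μ * ∑ j, x (r, j) := by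
    simp only [mul_sum, ← Fintype.sum_prod_ite_fst_eq, ← sum_add_distrib]
    refine sum_congr rfl fun p _ => ?_
    split_ifs <;> ring
  have hβ : 0 ≤ β := hγ.trans hγβ
  calc ∑ p, x p * f p
      ≤ ∑ p, x p * (lam + β * (p.1 : ℕ) + γ * (p.2 : ℕ) + if p.1 = r then μ else 0) :=
        sum_le_sum fun p _ => mul_le_mul_of_nonneg_left (hf p) (hx p)
    _ ≤ lam + β * (b * (1 - α)) + γ * (c + b * α) + μ * s := by
        rw [hexpand, hsum, mul_one]
        gcongr
    _ ≤ lam + b * β + c * γ + s * μ := by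
        nlinarith [mul_nonneg (mul_nonneg hb hα) (sub_nonneg.2 hγβ)]

/- `e^γ, e^β, e^λ, e^μ`. Tightness at `(1, 4)` and `(0, 5)` gives `e^β = (21/20) e^γ`, then
tightness at `(3, 1)` gives `e^γ = (21/20)^2 · 21/19`; `(0, 5)` and `(4, 0)` fix `e^λ` and `e^μ`. -/
def expDualSnd : ℚ := 9261 / 7600

def expDualFst : ℚ := 21 / 20 * expDualSnd

def expDualSum : ℚ := 4 / expDualSnd ^ 5

def expDualRow : ℚ := expDualSnd ^ 5 / expDualFst ^ 4

theorem expDual_pos :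
    (0 : ℝ) < expDualSum ∧ (0 : ℝ) < expDualFst ∧ (0 : ℝ) < expDualSnd ∧ (0 : ℝ) < expDualRow := by
  norm_num [expDualSum, expDualFst, expDualSnd, expDualRow]

def expDualWeight (p : Fin 5 × Fin 7) : ℚ :=
  expDualSum * expDualFst ^ (p.1 : ℕ) * expDualSnd ^ (p.2 : ℕ) *
    if p.1 = 4 then expDualRow else 1

theorem le_expDualWeight_and_one_le (p : Fin 5 × Fin 7) :
    ((p.1 : ℕ) + 4 / 5 * (p.2 : ℕ) : ℚ) ≤ expDualWeight p ∧ 1 ≤ expDualWeight p := by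
  obtain ⟨i, j⟩ := p
  fin_cases i <;> fin_cases j <;>
    norm_num [expDualWeight, expDualSum, expDualFst, expDualSnd, expDualRow, Fin.ext_iff]

theorem log_le_dual (p : Fin 5 × Fin 7) :
    Real.log (((p.1 : ℕ) : ℝ) + 4 / 5 * ((p.2 : ℕ) : ℝ)) ≤
      Real.log expDualSum + Real.log expDualFst * (p.1 : ℕ) + Real.log expDualSnd * (p.2 : ℕ) +
        if p.1 = 4 then Real.log expDualRow else 0 := by
  obtain ⟨hL, hB, hG, hM⟩ := expDual_pos
  obtain ⟨hu, hw⟩ := le_expDualWeight_and_one_le p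
  have hbase : Real.log ((expDualSum * expDualFst ^ (p.1 : ℕ) * expDualSnd ^ (p.2 : ℕ) : ℚ) : ℝ) =
      Real.log expDualSum + Real.log expDualFst * (p.1 : ℕ) + Real.log expDualSnd * (p.2 : ℕ) := by
    push_cast
    rw [Real.log_mul (by positivity) (by positivity), Real.log_mul (by positivity) (by positivity),
      Real.log_pow, Real.log_pow]
    ring
  calc Real.log (((p.1 : ℕ) : ℝ) + 4 / 5 * ((p.2 : ℕ) : ℝ))
      ≤ Real.log (expDualWeight p : ℝ) :=
        Real.log_le_log_of_le_of_one_le (by positivity) (by simpa using Rat.cast_le (K := ℝ) |>.2 hu)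
          (by exact_mod_cast hw)
    _ = _ := by
        rw [expDualWeight]
        split_ifs
        · rw [Rat.cast_mul, Real.log_mul (by push_cast; positivity) hM.ne', hbase]
        · rw [mul_one, hbase, add_zero]

theorem log_expDual_at_support :
    Real.log expDualSum + Real.log expDualFst + 4 * Real.log expDualSnd = Real.log (21 / 5) ∧
      Real.log expDualSum + 3 * Real.log expDualFst + Real.log expDualSnd = Real.log (19 / 5) ∧
      Real.log expDualSum + 5 * Real.log expDualSnd = Real.log 4 ∧
      Real.log expDualSum + 4 * Real.log expDualFst + Real.log expDualRow = Real.log 4 := by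
  obtain ⟨hL, hB, hG, hM⟩ := expDual_pos
  have hlog {q : ℚ} {r : ℝ} (h : q = r) : Real.log (q : ℝ) = Real.log r := by rw [h]
  have h1 := hlog (q := expDualSum * expDualFst * expDualSnd ^ 4) (r := 21 / 5)
    (by norm_num [expDualSum, expDualFst, expDualSnd])
  have h2 := hlog (q := expDualSum * expDualFst ^ 3 * expDualSnd) (r := 19 / 5)
    (by norm_num [expDualSum, expDualFst, expDualSnd])
  have h3 := hlog (q := expDualSum * expDualSnd ^ 5) (r := 4)
    (by norm_num [expDualSum, expDualSnd])
  have h4 := hlog (q := expDualSum * expDualFst ^ 4 * expDualRow) (r := 4)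
    (by norm_num [expDualSum, expDualFst, expDualSnd, expDualRow])
  push_cast at h1 h2 h3 h4
  simp only [Real.log_mul, Real.log_pow, hL.ne', hB.ne', hG.ne', hM.ne', ne_eq, pow_eq_zero_iff,
    mul_eq_zero, or_self, not_false_eq_true, OfNat.ofNat_ne_zero, Nat.cast_ofNat] at h1 h2 h3 h4
  exact ⟨h1, h2, h3, h4⟩

theorem stmt18_general (x : Fin 5 × Fin 7 → ℝ) (α : ℝ)
    (hx : ∀ p, 0 ≤ x p) (hα0 : 0 ≤ α)
    (hsum : ∑ p : Fin 5 × Fin 7, x p = 1)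
    (h4 : ∑ j : Fin 7, x (4, j) ≤ 53 / 162)
    (hbig : ∑ p : Fin 5 × Fin 7, ((p.1 : ℕ) : ℝ) * x p ≤ (4 / 3) * (1 - α))
    (hsmall : ∑ p : Fin 5 × Fin 7, ((p.2 : ℕ) : ℝ) * x p ≤ 10 / 3 + (4 / 3) * α) :
    ∑ p : Fin 5 × Fin 7, x p * Real.log (((p.1 : ℕ) : ℝ) + (4 / 5) * ((p.2 : ℕ) : ℝ)) ≤
      (1 / 162) * (Real.log (21 / 5) + Real.log (19 / 5)) + (160 / 162) * Real.log 4 := by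
  obtain ⟨-, -, hG, -⟩ := expDual_pos
  have hbound := sum_mul_le_of_dual_feasible hx hα0 (by norm_num) hsum h4 hbig hsmall
    (Real.log_nonneg (by norm_num [expDualRow, expDualFst, expDualSnd]))
    (Real.log_nonneg (by norm_num [expDualSnd]))
    (Real.log_le_log hG (by norm_num [expDualFst]; linarith)) log_le_dual
  obtain ⟨h1, h2, h3, h4⟩ := log_expDual_at_support
  linarith

/-- The LP bound (with `ε = 0`) from the APX-hardness reduction: any feasible solution
of the LP has objective value at most `(1/162)(log 4.2 + log 3.8) + (160/162) log 4`.
Valuation types are pairs `(i, j) ∈ {0,…,4} × {0,…,6}` with value `u_{ij} = i + (4/5)j`. -/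
theorem stmt18 (x : Fin 5 × Fin 7 → ℝ) (α : ℝ)
    (hx : ∀ p, 0 ≤ x p) (hα0 : 0 ≤ α) (hα1 : α ≤ 1)
    (hsum : ∑ p : Fin 5 × Fin 7, x p = 1)
    (h4 : ∑ j : Fin 7, x (4, j) ≤ 53 / 162)
    (hbig : ∑ p : Fin 5 × Fin 7, ((p.1 : ℕ) : ℝ) * x p ≤ (4 / 3) * (1 - α))
    (hsmall : ∑ p : Fin 5 × Fin 7, ((p.2 : ℕ) : ℝ) * x p ≤ 10 / 3 + (4 / 3) * α) :
    ∑ p : Fin 5 × Fin 7, x p * Real.log (((p.1 : ℕ) : ℝ) + (4 / 5) * ((p.2 : ℕ) : ℝ)) ≤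
      (1 / 162) * (Real.log (21 / 5) + Real.log (19 / 5)) + (160 / 162) * Real.log 4 :=
  stmt18_general x α hx hα0 hsum h4 hbig hsmall
end
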